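/- arXiv:2301.03566 — 7 statements merged into one kernel-verified Lean document; each statement's English description precedes it below -/
import Mathlib

section
/- There exist universal constants 0 < c ≤ C such that the following holds. Let ε > 0 and let p, q be distributions on [2]. Let V := sup over T ∈ P^ε_{2,2} of d_h²(Tp, Tq). If ε ≤ 1, then c·ε²·d_TV(p,q)² ≤ V ≤ C·ε²·d_TV(p,q)²; if ε > 1, then c·min(e^ε·d_TV(p,q)², d_h²(p,q)) ≤ V ≤ C·min(e^ε·d_TV(p,q)², d_h²(p,q)). Moreover, the supremum is attained by the binary randomized response channel: V = d_h²(RR^{ε,2} p, RR^{ε,2} q). -/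
open scoped Classical ENNReal
open Finset

noncomputable section

/-- `p` is a probability distribution on `Fin k`. -/
def IsDist {k : ℕ} (p : Fin k → ℝ) : Prop :=
  (∀ i, 0 ≤ p i) ∧ ∑ i, p i = 1

/-- `T` is a channel from `[k]` to `[ℓ]`: nonnegative entries, columns sum to 1. -/
def IsChannel {ℓ k : ℕ} (T : Matrix (Fin ℓ) (Fin k) ℝ) : Prop :=
  (∀ r c, 0 ≤ T r c) ∧ ∀ c, ∑ r, T r c = 1

/-- Squared Hellinger divergence `d_h²(p,q) = Σ_i (√p_i − √q_i)²`. -/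
def hellingerSq {k : ℕ} (p q : Fin k → ℝ) : ℝ :=
  ∑ i, (Real.sqrt (p i) - Real.sqrt (q i)) ^ 2

/-- Total variation distance `d_TV(p,q) = (1/2) Σ_i |p_i − q_i|`. -/
def tvDist {k : ℕ} (p q : Fin k → ℝ) : ℝ :=
  (1 / 2) * ∑ i, |p i - q i|

/-- `T` is an `ε`-LDP channel: `T(r,c) ≤ e^ε T(r,c')` for all rows `r`, columns `c, c'`. -/
def IsLDP {ℓ k : ℕ} (ε : ℝ) (T : Matrix (Fin ℓ) (Fin k) ℝ) : Prop :=
  IsChannel T ∧ ∀ r c c', T r c ≤ Real.exp ε * T r c'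

/-- The `ℓ`-ary randomized response channel with privacy parameter `ε`. -/
def RRChannel (ε : ℝ) (ℓ : ℕ) : Matrix (Fin ℓ) (Fin ℓ) ℝ :=
  fun j i => if j = i then Real.exp ε / ((ℓ : ℝ) - 1 + Real.exp ε)
             else 1 / ((ℓ : ℝ) - 1 + Real.exp ε)

open Real Matrix

/-!
Inverting the binary randomized response matrix shows that every `ε`-LDP channel with binary
input is `S * RRChannel ε 2` for a channel `S`, so by the data processing inequality for the
Hellinger divergence the supremum is attained at randomized response. Writing `E = exp ε` and `t = p 0 - q 0`, randomized
response maps a binary `v` to `((E - 1) v + 1) / (E + 1)`, so it scales coordinate differences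
by `(E - 1) / (E + 1)` and keeps each coordinate at least `1 / (E + 1)`. The coordinatewise
comparison `(x - y)² / (2 (x + y)) ≤ (√x - √y)² ≤ (x - y)² / (x + y)` then gives
`(E - 1)² t² / (E + 1) ≳ d_h² ≳ (E - 1)² t² / ((E + 1)((E - 1) s + 2))`, with `s ≤ 1` the smaller
coordinate mass of `p + q`. For `ε ≤ 1` both sides are of order `ε² t²`. For `ε > 1` the upper
bound is `E t²` together with `d_h²(p, q)` by data processing, and the lower bound is `E t²` or,
when `E s` is large, a multiple of `d_h²(p, q) ≤ 2 t² / s`.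
-/

section Hellinger

variable {k : ℕ} {p q : Fin k → ℝ}

lemma sqrt_sub_sq_eq {x y : ℝ} (hx : 0 ≤ x) (hy : 0 ≤ y) :
    (√x - √y) ^ 2 = x + y - 2 * (√x * √y) := by
  rw [sub_sq, sq_sqrt hx, sq_sqrt hy]; ring

lemma sq_sub_le_two_mul_add_mul_sqrt_sub_sq {x y : ℝ} (hx : 0 ≤ x) (hy : 0 ≤ y) :
    (x - y) ^ 2 ≤ 2 * (x + y) * (√x - √y) ^ 2 := by
  have hx' := sq_sqrt hx
  have hy' := sq_sqrt hy
  nlinarith [sq_nonneg ((√x - √y) * (√x - √y)), sq_nonneg (√x - √y), sq_nonneg (√x + √y)]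

lemma sqrt_sub_sq_mul_add_le_sq_sub {x y : ℝ} (hx : 0 ≤ x) (hy : 0 ≤ y) :
    (√x - √y) ^ 2 * (x + y) ≤ (x - y) ^ 2 := by
  have hx' := sq_sqrt hx
  have hy' := sq_sqrt hy
  nlinarith [mul_nonneg (sqrt_nonneg x) (sqrt_nonneg y), sq_nonneg (√x - √y), sq_nonneg (√x + √y)]

lemma hellingerSq_nonneg (p q : Fin k → ℝ) : 0 ≤ hellingerSq p q :=
  Finset.sum_nonneg fun _ _ => sq_nonneg _

lemma hellingerSq_eq_sum_sub (hp : ∀ i, 0 ≤ p i) (hq : ∀ i, 0 ≤ q i) :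
    hellingerSq p q = ∑ i, p i + ∑ i, q i - 2 * ∑ i, √(p i) * √(q i) := by
  simp only [hellingerSq, sqrt_sub_sq_eq (hp _) (hq _), Finset.sum_sub_distrib,
    Finset.sum_add_distrib, Finset.mul_sum]

lemma sq_sub_le_mul_hellingerSq (hp : ∀ i, 0 ≤ p i) (hq : ∀ i, 0 ≤ q i) (i : Fin k) :
    (p i - q i) ^ 2 ≤ 2 * (p i + q i) * hellingerSq p q := by
  have hsingle : (√(p i) - √(q i)) ^ 2 ≤ hellingerSq p q :=
    Finset.single_le_sum (f := fun j => (√(p j) - √(q j)) ^ 2) (fun _ _ => sq_nonneg _)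
      (Finset.mem_univ i)
  calc (p i - q i) ^ 2 ≤ 2 * (p i + q i) * (√(p i) - √(q i)) ^ 2 :=
        sq_sub_le_two_mul_add_mul_sqrt_sub_sq (hp i) (hq i)
    _ ≤ 2 * (p i + q i) * hellingerSq p q := by
        gcongr
        linarith [hp i, hq i]

lemma hellingerSq_mul_le_sum_sq_sub (hp : ∀ i, 0 ≤ p i) (hq : ∀ i, 0 ≤ q i) {s : ℝ}
    (hspq : ∀ i, s ≤ p i + q i) :
    hellingerSq p q * s ≤ ∑ i, (p i - q i) ^ 2 := by
  rw [hellingerSq, Finset.sum_mul]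
  refine Finset.sum_le_sum fun i _ => ?_
  calc (√(p i) - √(q i)) ^ 2 * s ≤ (√(p i) - √(q i)) ^ 2 * (p i + q i) := by gcongr; exact hspq i
    _ ≤ (p i - q i) ^ 2 := sqrt_sub_sq_mul_add_le_sq_sub (hp i) (hq i)

end Hellinger

section Channel

variable {ℓ k : ℕ} {T : Matrix (Fin ℓ) (Fin k) ℝ} {p q : Fin k → ℝ}

lemma IsChannel.sum_mulVec (hT : IsChannel T) (p : Fin k → ℝ) : ∑ r, (T *ᵥ p) r = ∑ c, p c := by
  simp only [mulVec, dotProduct]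
  rw [Finset.sum_comm]
  simp only [← Finset.sum_mul, hT.2, one_mul]

lemma IsChannel.mulVec_nonneg (hT : IsChannel T) (hp : ∀ c, 0 ≤ p c) (r : Fin ℓ) :
    0 ≤ (T *ᵥ p) r := by
  simp only [mulVec, dotProduct]
  exact Finset.sum_nonneg fun c _ => mul_nonneg (hT.1 r c) (hp c)

lemma IsChannel.sum_sqrt_mul_sqrt_le (hT : IsChannel T) (hp : ∀ c, 0 ≤ p c) (hq : ∀ c, 0 ≤ q c) :
    ∑ c, √(p c) * √(q c) ≤ ∑ r, √((T *ᵥ p) r) * √((T *ᵥ q) r) := by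
  calc ∑ c, √(p c) * √(q c) = ∑ r, ∑ c, √(T r c * p c) * √(T r c * q c) := by
        rw [Finset.sum_comm]
        refine Finset.sum_congr rfl fun c _ => ?_
        simp only [sqrt_mul (hT.1 _ c), mul_mul_mul_comm, mul_self_sqrt (hT.1 _ c)]
        rw [← Finset.sum_mul, hT.2, one_mul]
    _ ≤ ∑ r, √((T *ᵥ p) r) * √((T *ᵥ q) r) :=
        Finset.sum_le_sum fun r _ => Real.sum_sqrt_mul_sqrt_le _
          (fun c => mul_nonneg (hT.1 r c) (hp c)) (fun c => mul_nonneg (hT.1 r c) (hq c))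

theorem IsChannel.hellingerSq_mulVec_le (hT : IsChannel T) (hp : ∀ c, 0 ≤ p c)
    (hq : ∀ c, 0 ≤ q c) : hellingerSq (T *ᵥ p) (T *ᵥ q) ≤ hellingerSq p q := by
  rw [hellingerSq_eq_sum_sub (hT.mulVec_nonneg hp) (hT.mulVec_nonneg hq),
    hellingerSq_eq_sum_sub hp hq, hT.sum_mulVec, hT.sum_mulVec]
  linarith [hT.sum_sqrt_mul_sqrt_le hp hq]

end Channel

section RandomizedResponse

variable {ε : ℝ}

theorem isLDP_RRChannel (hε : 0 ≤ ε) (ℓ : ℕ) : IsLDP ε (RRChannel ε ℓ) := by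
  rcases Nat.eq_zero_or_pos ℓ with rfl | hℓ
  · exact ⟨⟨fun r => r.elim0, fun c => c.elim0⟩, fun r => r.elim0⟩
  have hD : 0 < (ℓ : ℝ) - 1 + exp ε := by
    have : (1 : ℝ) ≤ ℓ := by exact_mod_cast hℓ
    linarith [exp_pos ε]
  have h1E : 1 ≤ exp ε := one_le_exp hε
  refine ⟨⟨fun r c => by unfold RRChannel; split_ifs <;> positivity, fun c => ?_⟩, ?_⟩
  · simp only [RRChannel, Finset.sum_ite, Finset.filter_eq', Finset.filter_ne', Finset.mem_univ,
      if_true, Finset.sum_const, Finset.card_singleton, Finset.card_erase_of_mem, Finset.card_univ,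
      Fintype.card_fin, nsmul_eq_mul, Nat.cast_one, Nat.cast_sub hℓ]
    field_simp
    ring
  · intro r c c'
    have hle : 1 / ((ℓ : ℝ) - 1 + exp ε) ≤ exp ε / ((ℓ : ℝ) - 1 + exp ε) := by gcongr
    have hmul : exp ε / ((ℓ : ℝ) - 1 + exp ε) = exp ε * (1 / ((ℓ : ℝ) - 1 + exp ε)) := by ring
    unfold RRChannel
    split_ifs <;> nlinarith [exp_pos ε]

lemma RRChannel_two_apply (ε : ℝ) (j i : Fin 2) :
    RRChannel ε 2 j i = if j = i then exp ε / (exp ε + 1) else 1 / (exp ε + 1) := by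
  simp only [RRChannel]; norm_num [add_comm]

lemma RRChannel_two_mulVec_apply {v : Fin 2 → ℝ} (hv : ∑ i, v i = 1) (i : Fin 2) :
    (RRChannel ε 2 *ᵥ v) i = ((exp ε - 1) * v i + 1) / (exp ε + 1) := by
  rw [Fin.sum_univ_two] at hv
  fin_cases i <;>
    simp only [mulVec, dotProduct, Fin.zero_eta, Fin.mk_one, Fin.isValue, RRChannel_two_apply,
      one_div, ite_mul, Fin.sum_univ_two, ↓reduceIte, zero_ne_one, one_ne_zero] <;>
    field_simp <;> linarith

theorem IsLDP.exists_eq_mul_RRChannel_two (hε : 0 < ε) {ℓ : ℕ} {T : Matrix (Fin ℓ) (Fin 2) ℝ}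
    (hT : IsLDP ε T) : ∃ S : Matrix (Fin ℓ) (Fin 2) ℝ, IsChannel S ∧ T = S * RRChannel ε 2 := by
  have hE : 0 < exp ε - 1 := by linarith [add_one_le_exp ε]
  -- `S = T * (RRChannel ε 2)⁻¹`; its entries are nonnegative exactly by the `ε`-LDP constraints.
  refine ⟨Matrix.of fun r c => (exp ε * T r c - T r c.rev) / (exp ε - 1),
    ⟨fun r c => ?_, fun c => ?_⟩, ?_⟩
  · exact div_nonneg (by linarith [hT.2 r c.rev c]) hE.le
  · simp only [Matrix.of_apply]
    rw [← Finset.sum_div, Finset.sum_sub_distrib, ← Finset.mul_sum, hT.1.2, hT.1.2, mul_one,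
      div_self hE.ne']
  · ext r c
    fin_cases c <;>
      simp only [Fin.zero_eta, Fin.mk_one, Fin.isValue, Matrix.mul_apply, of_apply,
        RRChannel_two_apply, one_div, mul_ite, Fin.sum_univ_two, ↓reduceIte, Fin.rev_zero,
        Fin.reduceLast, Fin.reduceRev, zero_ne_one, one_ne_zero] <;>
      field_simp <;> ring

theorem hellingerSq_mulVec_le_RRChannel_two (hε : 0 < ε) {ℓ : ℕ}
    {T : Matrix (Fin ℓ) (Fin 2) ℝ} (hT : IsLDP ε T) {p q : Fin 2 → ℝ} (hp : ∀ i, 0 ≤ p i)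
    (hq : ∀ i, 0 ≤ q i) :
    hellingerSq (T *ᵥ p) (T *ᵥ q) ≤ hellingerSq (RRChannel ε 2 *ᵥ p) (RRChannel ε 2 *ᵥ q) := by
  obtain ⟨S, hS, rfl⟩ := hT.exists_eq_mul_RRChannel_two hε
  have hRR := (isLDP_RRChannel hε.le 2).1
  simp only [← mulVec_mulVec]
  exact hS.hellingerSq_mulVec_le (hRR.mulVec_nonneg hp) (hRR.mulVec_nonneg hq)

theorem sSup_hellingerSq_isLDP_eq (hε : 0 < ε) {p q : Fin 2 → ℝ} (hp : ∀ i, 0 ≤ p i)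
    (hq : ∀ i, 0 ≤ q i) :
    sSup {x : ℝ | ∃ T : Matrix (Fin 2) (Fin 2) ℝ,
        IsLDP ε T ∧ x = hellingerSq (T.mulVec p) (T.mulVec q)} =
      hellingerSq ((RRChannel ε 2).mulVec p) ((RRChannel ε 2).mulVec q) :=
  IsGreatest.csSup_eq ⟨⟨_, isLDP_RRChannel hε.le 2, rfl⟩, by
    rintro _ ⟨T, hT, rfl⟩
    exact hellingerSq_mulVec_le_RRChannel_two hε hT hp hq⟩

end RandomizedResponse

section Binary

variable {ε : ℝ} {p q : Fin 2 → ℝ}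

lemma sq_sub_fin_two (hp : ∑ i, p i = 1) (hq : ∑ i, q i = 1) (i : Fin 2) :
    (p i - q i) ^ 2 = (p 0 - q 0) ^ 2 := by
  rw [Fin.sum_univ_two] at hp hq
  fin_cases i
  · rfl
  · rw [Fin.mk_one, show p 1 - q 1 = -(p 0 - q 0) by linarith, neg_sq]

lemma tvDist_sq_fin_two (hp : ∑ i, p i = 1) (hq : ∑ i, q i = 1) :
    tvDist p q ^ 2 = (p 0 - q 0) ^ 2 := by
  have h1 : |p 1 - q 1| = |p 0 - q 0| := by
    rw [← sq_eq_sq₀ (abs_nonneg _) (abs_nonneg _), sq_abs, sq_abs, sq_sub_fin_two hp hq]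
  rw [tvDist, Fin.sum_univ_two, h1, ← sq_abs (p 0 - q 0)]
  ring

lemma exists_hellingerSq_mul_le (hp : IsDist p) (hq : IsDist q) :
    ∃ i, p i + q i ≤ 1 ∧ hellingerSq p q * (p i + q i) ≤ 2 * (p 0 - q 0) ^ 2 := by
  have hsum : (p 0 + q 0) + (p 1 + q 1) = 2 := by
    linarith [Fin.sum_univ_two p ▸ hp.2, Fin.sum_univ_two q ▸ hq.2]
  have hmin : ∃ i, p i + q i ≤ 1 ∧ ∀ j, p i + q i ≤ p j + q j := by
    by_cases h : p 0 + q 0 ≤ 1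
    · exact ⟨0, h, Fin.forall_fin_two.2 ⟨le_rfl, by linarith⟩⟩
    · exact ⟨1, by linarith, Fin.forall_fin_two.2 ⟨by linarith, le_rfl⟩⟩
  obtain ⟨i, hi, hij⟩ := hmin
  refine ⟨i, hi, ?_⟩
  calc hellingerSq p q * (p i + q i) ≤ ∑ j, (p j - q j) ^ 2 :=
        hellingerSq_mul_le_sum_sq_sub hp.1 hq.1 hij
    _ = 2 * (p 0 - q 0) ^ 2 := by simp only [sq_sub_fin_two hp.2 hq.2, Fin.sum_univ_two]; ring


lemma RRChannel_two_mulVec_sub (hp : ∑ i, p i = 1) (hq : ∑ i, q i = 1) (i : Fin 2) :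
    (RRChannel ε 2 *ᵥ p) i - (RRChannel ε 2 *ᵥ q) i = (exp ε - 1) / (exp ε + 1) * (p i - q i) := by
  rw [RRChannel_two_mulVec_apply hp, RRChannel_two_mulVec_apply hq]
  ring

lemma RRChannel_two_mulVec_add (hp : ∑ i, p i = 1) (hq : ∑ i, q i = 1) (i : Fin 2) :
    (RRChannel ε 2 *ᵥ p) i + (RRChannel ε 2 *ᵥ q) i =
      ((exp ε - 1) * (p i + q i) + 2) / (exp ε + 1) := by
  rw [RRChannel_two_mulVec_apply hp, RRChannel_two_mulVec_apply hq]
  ring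

lemma hellingerSq_RRChannel_two_mul_le (hε : 0 ≤ ε) (hp : IsDist p) (hq : IsDist q) :
    hellingerSq (RRChannel ε 2 *ᵥ p) (RRChannel ε 2 *ᵥ q) * (exp ε + 1) ≤
      (exp ε - 1) ^ 2 * (p 0 - q 0) ^ 2 := by
  have hRR := (isLDP_RRChannel hε 2).1
  have hE1 : 0 ≤ exp ε - 1 := by linarith [one_le_exp hε]
  have hmass : ∀ i, 2 / (exp ε + 1) ≤ (RRChannel ε 2 *ᵥ p) i + (RRChannel ε 2 *ᵥ q) i := by
    intro i
    rw [RRChannel_two_mulVec_add hp.2 hq.2]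
    gcongr
    nlinarith [hp.1 i, hq.1 i]
  have h := hellingerSq_mul_le_sum_sq_sub (hRR.mulVec_nonneg hp.1) (hRR.mulVec_nonneg hq.1) hmass
  simp only [RRChannel_two_mulVec_sub hp.2 hq.2, mul_pow, sq_sub_fin_two hp.2 hq.2,
    Fin.sum_univ_two] at h
  field_simp at h
  linarith

lemma sq_mul_sq_sub_le_hellingerSq_RRChannel_two (hε : 0 ≤ ε) (hp : IsDist p) (hq : IsDist q)
    (i : Fin 2) :
    (exp ε - 1) ^ 2 * (p 0 - q 0) ^ 2 ≤
      2 * (exp ε + 1) * ((exp ε - 1) * (p i + q i) + 2) *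
        hellingerSq (RRChannel ε 2 *ᵥ p) (RRChannel ε 2 *ᵥ q) := by
  have hRR := (isLDP_RRChannel hε 2).1
  have h := sq_sub_le_mul_hellingerSq (hRR.mulVec_nonneg hp.1) (hRR.mulVec_nonneg hq.1) i
  rw [RRChannel_two_mulVec_sub hp.2 hq.2, RRChannel_two_mulVec_add hp.2 hq.2, mul_pow,
    sq_sub_fin_two hp.2 hq.2, div_pow] at h
  field_simp at h
  linarith

theorem mul_sq_tvDist_le_hellingerSq_RRChannel_two (hε : 0 < ε) (hε1 : ε ≤ 1) (hp : IsDist p)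
    (hq : IsDist q) :
    1 / 64 * ε ^ 2 * tvDist p q ^ 2 ≤ hellingerSq (RRChannel ε 2 *ᵥ p) (RRChannel ε 2 *ᵥ q) := by
  rw [tvDist_sq_fin_two hp.2 hq.2]
  obtain ⟨i, hi, -⟩ := exists_hellingerSq_mul_le hp hq
  have hlow := sq_mul_sq_sub_le_hellingerSq_RRChannel_two hε.le hp hq i
  have hH := hellingerSq_nonneg (RRChannel ε 2 *ᵥ p) (RRChannel ε 2 *ᵥ q)
  have hεE : ε ≤ exp ε - 1 := by linarith [add_one_le_exp ε]
  have hE3 : exp ε ≤ 3 := (exp_le_exp.2 hε1).trans exp_one_lt_three.le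
  have hfactor : 2 * (exp ε + 1) * ((exp ε - 1) * (p i + q i) + 2) ≤ 32 := by nlinarith
  have hεt : ε ^ 2 * (p 0 - q 0) ^ 2 ≤ (exp ε - 1) ^ 2 * (p 0 - q 0) ^ 2 := by gcongr
  nlinarith [mul_le_mul_of_nonneg_right hfactor hH]

theorem hellingerSq_RRChannel_two_le_mul_sq_tvDist (hε : 0 < ε) (hε1 : ε ≤ 1) (hp : IsDist p)
    (hq : IsDist q) :
    hellingerSq (RRChannel ε 2 *ᵥ p) (RRChannel ε 2 *ᵥ q) ≤ 4 * ε ^ 2 * tvDist p q ^ 2 := by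
  rw [tvDist_sq_fin_two hp.2 hq.2]
  have hup := hellingerSq_RRChannel_two_mul_le hε.le hp hq
  have hH := hellingerSq_nonneg (RRChannel ε 2 *ᵥ p) (RRChannel ε 2 *ᵥ q)
  have hEε : (exp ε - 1) ^ 2 ≤ 4 * ε ^ 2 := by
    have := abs_exp_sub_one_le (x := ε) (by rwa [abs_of_pos hε])
    rw [abs_of_pos hε] at this
    nlinarith [abs_nonneg (exp ε - 1), sq_abs (exp ε - 1)]
  nlinarith [exp_pos ε, mul_le_mul_of_nonneg_right hEε (sq_nonneg (p 0 - q 0))]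

theorem min_le_hellingerSq_RRChannel_two (hε : 1 < ε) (hp : IsDist p) (hq : IsDist q) :
    1 / 64 * min (exp ε * tvDist p q ^ 2) (hellingerSq p q) ≤
      hellingerSq (RRChannel ε 2 *ᵥ p) (RRChannel ε 2 *ᵥ q) := by
  rw [tvDist_sq_fin_two hp.2 hq.2]
  obtain ⟨i, hi, hG⟩ := exists_hellingerSq_mul_le hp hq
  have hlow := sq_mul_sq_sub_le_hellingerSq_RRChannel_two (ε := ε) (by linarith) hp hq i
  have hH := hellingerSq_nonneg (RRChannel ε 2 *ᵥ p) (RRChannel ε 2 *ᵥ q)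
  have hE2 : 2 ≤ exp ε := exp_one_gt_two.le.trans (exp_le_exp.2 hε.le)
  set H := hellingerSq (RRChannel ε 2 *ᵥ p) (RRChannel ε 2 *ᵥ q)
  set G := hellingerSq p q
  set t := p 0 - q 0
  set s := p i + q i
  suffices min (exp ε * t ^ 2) G ≤ 64 * H by linarith
  rcases le_or_gt ((exp ε - 1) * s) 2 with hsmall | hlarge
  · refine (min_le_left _ _).trans ?_
    have h1 : (exp ε - 1) ^ 2 * t ^ 2 ≤ 8 * (exp ε + 1) * H := by
      nlinarith [mul_nonneg hH (by linarith : (0 : ℝ) ≤ exp ε + 1)]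
    have h2 : exp ε * (exp ε + 1) ≤ 8 * (exp ε - 1) ^ 2 := by nlinarith
    have h3 : exp ε * t ^ 2 * (exp ε + 1) ≤ 64 * H * (exp ε + 1) := by
      nlinarith [mul_le_mul_of_nonneg_right h2 (sq_nonneg t)]
    nlinarith [le_of_mul_le_mul_right h3 (by linarith)]
  · refine (min_le_right _ _).trans ?_
    have hs0 : 0 < s := by nlinarith
    have h1 : (exp ε - 1) * t ^ 2 ≤ 4 * (exp ε + 1) * s * H := by
      refine le_of_mul_le_mul_left ?_ (by linarith : 0 < exp ε - 1)
      nlinarith [mul_nonneg hH (by linarith : (0 : ℝ) ≤ exp ε + 1)]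
    have h2 : G * (exp ε - 1) * s ≤ 8 * (exp ε + 1) * H * s := by nlinarith
    have h3 : G * (exp ε - 1) ≤ 8 * (exp ε + 1) * H := le_of_mul_le_mul_right h2 hs0
    nlinarith [hellingerSq_nonneg p q]

theorem hellingerSq_RRChannel_two_le_min (hε : 1 < ε) (hp : IsDist p) (hq : IsDist q) :
    hellingerSq (RRChannel ε 2 *ᵥ p) (RRChannel ε 2 *ᵥ q) ≤
      4 * min (exp ε * tvDist p q ^ 2) (hellingerSq p q) := by
  rw [tvDist_sq_fin_two hp.2 hq.2]
  have hε0 : 0 ≤ ε := by linarith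
  have hup := hellingerSq_RRChannel_two_mul_le hε0 hp hq
  have hH := hellingerSq_nonneg (RRChannel ε 2 *ᵥ p) (RRChannel ε 2 *ᵥ q)
  have hE2 : 2 ≤ exp ε := exp_one_gt_two.le.trans (exp_le_exp.2 hε.le)
  have hHE : hellingerSq (RRChannel ε 2 *ᵥ p) (RRChannel ε 2 *ᵥ q) ≤ exp ε * (p 0 - q 0) ^ 2 := by
    refine le_of_mul_le_mul_right ?_ (by linarith : 0 < exp ε + 1)
    nlinarith [sq_nonneg (p 0 - q 0)]
  have hHG := (isLDP_RRChannel hε0 2).1.hellingerSq_mulVec_le hp.1 hq.1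
  linarith [le_min hHE hHG]

end Binary

/-- Strong data processing inequality for randomized response on binary distributions
(Proposition: sample complexity of binary distributions / SDPI for Hellinger divergence). -/
theorem stmt0 :
    ∃ c C : ℝ, 0 < c ∧ c ≤ C ∧
      ∀ ε : ℝ, 0 < ε → ∀ p q : Fin 2 → ℝ, IsDist p → IsDist q →
        ∀ V : ℝ,
          V = sSup {x : ℝ | ∃ T : Matrix (Fin 2) (Fin 2) ℝ,
              IsLDP ε T ∧ x = hellingerSq (T.mulVec p) (T.mulVec q)} →
          (ε ≤ 1 →
            c * ε ^ 2 * tvDist p q ^ 2 ≤ V ∧ V ≤ C * ε ^ 2 * tvDist p q ^ 2) ∧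
          (1 < ε →
            c * min (Real.exp ε * tvDist p q ^ 2) (hellingerSq p q) ≤ V ∧
            V ≤ C * min (Real.exp ε * tvDist p q ^ 2) (hellingerSq p q)) ∧
          V = hellingerSq ((RRChannel ε 2).mulVec p) ((RRChannel ε 2).mulVec q) := by
  refine ⟨1 / 64, 4, by norm_num, by norm_num, fun ε hε p q hp hq V hV => ?_⟩
  rw [hV, sSup_hellingerSq_isLDP_eq hε hp.1 hq.1]
  refine ⟨fun hε1 => ⟨?_, ?_⟩, fun hε1 => ⟨?_, ?_⟩, rfl⟩
  · exact mul_sq_tvDist_le_hellingerSq_RRChannel_two hε hε1 hp hq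
  · exact hellingerSq_RRChannel_two_le_mul_sq_tvDist hε hε1 hp hq
  · exact min_le_hellingerSq_RRChannel_two hε1 hp hq
  · exact hellingerSq_RRChannel_two_le_min hε1 hp hq
end
end

section
/- There exist universal constants 0 < c ≤ C such that for all real numbers p, q ∈ [0,1] with min(p,q) ≤ 1/2 and max(p,q) > 0, one has c·(p−q)²/max(p,q) ≤ d_h²(Ber(p), Ber(q)) ≤ C·(p−q)²/max(p,q), where Ber(x) denotes the distribution (x, 1−x) on [2]. -/
open scoped Classical ENNReal
open Finset

noncomputable section

lemma helperX (p q : ℝ) (hq0 : 0 ≤ q) (hqp : q ≤ p) (hp1 : p ≤ 1) (hq : q ≤ 1/2) (hp : 0 < p) :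
    (1/4) * (p - q) ^ 2 / p ≤ (Real.sqrt p - Real.sqrt q) ^ 2 + (Real.sqrt (1-p) - Real.sqrt (1-q)) ^ 2 ∧
    (Real.sqrt p - Real.sqrt q) ^ 2 + (Real.sqrt (1-p) - Real.sqrt (1-q)) ^ 2 ≤ 3 * (p - q) ^ 2 / p := by
  set a := Real.sqrt p with ha
  set b := Real.sqrt q with hb
  set u := Real.sqrt (1-p) with hu
  set v := Real.sqrt (1-q) with hv
  have ha2 : a ^ 2 = p := Real.sq_sqrt hp.le
  have hb2 : b ^ 2 = q := Real.sq_sqrt hq0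
  have hu2 : u ^ 2 = 1 - p := Real.sq_sqrt (by linarith)
  have hv2 : v ^ 2 = 1 - q := Real.sq_sqrt (by linarith)
  have ha0 : 0 ≤ a := Real.sqrt_nonneg _
  have hb0 : 0 ≤ b := Real.sqrt_nonneg _
  have hu0 : 0 ≤ u := Real.sqrt_nonneg _
  have hv0 : 0 ≤ v := Real.sqrt_nonneg _
  have hba : b ≤ a := Real.sqrt_le_sqrt hqp
  have huv : u ≤ v := Real.sqrt_le_sqrt (by linarith)
  constructor
  · rw [div_le_iff₀ hp]
    nlinarith [sq_nonneg (u - v), sq_nonneg (a - b), sq_nonneg ((a-b)*(a+b)), mul_nonneg (sq_nonneg (a-b)) (sq_nonneg (a+b))]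
  · rw [le_div_iff₀ hp]
    nlinarith [sq_nonneg (u - v), sq_nonneg (a - b), mul_nonneg (sq_nonneg (u-v)) hv0, sq_nonneg (v-u), mul_nonneg (mul_nonneg hu0 hv0) (sq_nonneg (u-v)), mul_nonneg (sq_nonneg (a-b)) hb0, mul_nonneg (mul_nonneg ha0 hb0) (sq_nonneg (a-b))]

/-- Approximation of the Hellinger divergence between two Bernoulli distributions. -/
theorem stmt1 :
    ∃ c C : ℝ, 0 < c ∧ c ≤ C ∧
      ∀ p q : ℝ, 0 ≤ p → p ≤ 1 → 0 ≤ q → q ≤ 1 →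
        min p q ≤ 1 / 2 → 0 < max p q →
        c * (p - q) ^ 2 / max p q ≤ hellingerSq ![p, 1 - p] ![q, 1 - q] ∧
        hellingerSq ![p, 1 - p] ![q, 1 - q] ≤ C * (p - q) ^ 2 / max p q := by
  refine ⟨1/4, 3, by norm_num, by norm_num, fun p q hp0 hp1 hq0 hq1 hmin hmax => ?_⟩
  have hsum : hellingerSq ![p, 1 - p] ![q, 1 - q]
      = (Real.sqrt p - Real.sqrt q) ^ 2 + (Real.sqrt (1-p) - Real.sqrt (1-q)) ^ 2 := by
    simp [hellingerSq, Fin.sum_univ_two]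
  rcases le_total q p with h | h
  · have hM : max p q = p := max_eq_left h
    have hm : min p q = q := min_eq_right h
    rw [hM] at hmax ⊢
    rw [hm] at hmin
    rw [hsum]
    exact helperX p q hq0 h hp1 hmin hmax
  · have hM : max p q = q := max_eq_right h
    have hm : min p q = p := min_eq_left h
    rw [hM] at hmax ⊢
    rw [hm] at hmin
    rw [hsum]
    have hswap : (Real.sqrt p - Real.sqrt q) ^ 2 + (Real.sqrt (1-p) - Real.sqrt (1-q)) ^ 2
        = (Real.sqrt q - Real.sqrt p) ^ 2 + (Real.sqrt (1-q) - Real.sqrt (1-p)) ^ 2 := by ring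
    have h2 : (p - q) ^ 2 = (q - p) ^ 2 := by ring
    rw [hswap, h2]
    exact helperX q p hp0 h hq1 hmin hmax
end
end

section
/- There exist universal constants c₀ > 0 and 0 < c ≤ C such that for all ρ, ν ∈ (0, 1/2) with 2ν² ≤ ρ ≤ ν, there exist distributions p, q on [3] with d_h²(p,q) = ρ and d_TV(p,q) = ν such that for every ε ≥ 1 with e^ε ≤ c₀/ρ, one has c·max(ν², e^ε·ρ²) ≤ sup over T ∈ P^ε_{3,3} of d_h²(Tp, Tq) ≤ C·max(ν², e^ε·ρ²). -/
open scoped Classical ENNReal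
open Finset

noncomputable section

/-! The hard pair is `p = (a, (1+ν)/2 - a, (1-ν)/2)`, `q = (0, (1-ν)/2, (1+ν)/2)`. Its total
variation is `ν` for every `a ∈ [0, ν]`, while `d_h²(p,q) = a + O(ν²)` is continuous in `a`, so
the intermediate value theorem yields `a ≍ ρ` with `d_h²(p,q) = ρ`.

Upper bound: on an output row `r` of an `ε`-LDP channel, `(Tq)_r ≥ (T r 1 + T r 2)/4` and
`(Tp - Tq)_r = (T r 0 - T r 1) a + (T r 1 - T r 2) ν` with `|T r 0 - T r 1| ≤ e^ε T r 1`, so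
`(√s - √u)² ≤ (s - u)²/u` bounds each row by `O(e^ε a² |T r 0 - T r 1| + ν² (T r 1 + T r 2))`,
and the column sums give `O(e^ε ρ² + ν²)`.

Lower bound: two binary channels, both `ε`-LDP once `e^ε ≥ 2`. Telling `{0, 1}` from `{2}` with
probabilities `2/3` and `1/3` gives `ν²/18`; randomized response singling out the atom `0`, with
probabilities `1/2` and `1/(2e^ε)`, gives `e^ε a²/48`. -/

open Real Matrix

section SqrtDifference

variable {x y : ℝ}

lemma sqrt_sub_sqrt_sq_mul_sqrt_add_sqrt_sq (hx : 0 ≤ x) (hy : 0 ≤ y) :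
    (√x - √y) ^ 2 * (√x + √y) ^ 2 = (x - y) ^ 2 := by
  rw [← mul_pow]
  congr 1
  linear_combination sq_sqrt hx - sq_sqrt hy

lemma add_add_two_mul_min_le_sqrt_add_sqrt_sq (hx : 0 ≤ x) (hy : 0 ≤ y) :
    x + y + 2 * min x y ≤ (√x + √y) ^ 2 := by
  have hmin : min x y ≤ √x * √y := by
    calc min x y = √(min x y) * √(min x y) := (mul_self_sqrt (le_min hx hy)).symm
      _ ≤ √x * √y := by gcongr <;> simp
  nlinarith [sq_sqrt hx, sq_sqrt hy]

lemma sqrt_add_sqrt_sq_le (hx : 0 ≤ x) (hy : 0 ≤ y) : (√x + √y) ^ 2 ≤ 2 * (x + y) := by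
  nlinarith [sq_sqrt hx, sq_sqrt hy, sq_nonneg (√x - √y)]

lemma sqrt_sub_sqrt_sq_le_div {m : ℝ} (hx : 0 ≤ x) (hy : 0 ≤ y) (hm : 0 < m)
    (h : m ≤ (√x + √y) ^ 2) : (√x - √y) ^ 2 ≤ (x - y) ^ 2 / m := by
  rw [le_div_iff₀ hm, ← sqrt_sub_sqrt_sq_mul_sqrt_add_sqrt_sq hx hy]
  exact mul_le_mul_of_nonneg_left h (sq_nonneg _)

lemma div_le_sqrt_sub_sqrt_sq (hx : 0 ≤ x) (hy : 0 ≤ y) :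
    (x - y) ^ 2 / (2 * (x + y)) ≤ (√x - √y) ^ 2 := by
  rcases (add_nonneg hx hy).eq_or_lt with hxy | hxy
  · rw [← hxy, mul_zero, div_zero]
    positivity
  · rw [div_le_iff₀ (by positivity), ← sqrt_sub_sqrt_sq_mul_sqrt_add_sqrt_sq hx hy]
    exact mul_le_mul_of_nonneg_left (sqrt_add_sqrt_sq_le hx hy) (sq_nonneg _)

end SqrtDifference

lemma sqrt_sub_sqrt_sq_le_hellingerSq {k : ℕ} (p q : Fin k → ℝ) (i : Fin k) :
    (√(p i) - √(q i)) ^ 2 ≤ hellingerSq p q :=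
  Finset.single_le_sum (fun j _ => sq_nonneg (√(p j) - √(q j))) (Finset.mem_univ i)

lemma sqrt_sub_sqrt_sq_le_of_ldp_row {E a ν t₁ t₂ t₃ s u : ℝ} (hE : 1 ≤ E)
    (ht₁ : 0 ≤ t₁) (ht₂ : 0 ≤ t₂) (ht₃ : 0 ≤ t₃) (h₁₂ : t₁ ≤ E * t₂)
    (hs : 0 ≤ s) (hu : (t₂ + t₃) / 4 ≤ u) (hsu : s - u = (t₁ - t₂) * a + (t₂ - t₃) * ν) :
    (√s - √u) ^ 2 ≤ 8 * E * a ^ 2 * |t₁ - t₂| + 8 * ν ^ 2 * (t₂ + t₃) := by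
  rcases (add_nonneg ht₂ ht₃).eq_or_lt with h₀ | h₀
  · obtain rfl : t₂ = 0 := by linarith
    obtain rfl : t₃ = 0 := by linarith
    obtain rfl : t₁ = 0 := by linarith [mul_zero E]
    obtain rfl : s = u := by linarith
    simp
  · have hu₀ : 0 ≤ u := by linarith
    have hm : (t₂ + t₃) / 4 ≤ (√s + √u) ^ 2 :=
      hu.trans (by linarith [add_add_two_mul_min_le_sqrt_add_sqrt_sq hs hu₀, le_min hs hu₀])
    have h₁₂' : |t₁ - t₂| ≤ E * (t₂ + t₃) := abs_le.2 ⟨by nlinarith, by nlinarith⟩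
    have hsq₁ : (t₁ - t₂) ^ 2 * a ^ 2 ≤ E * (t₂ + t₃) * |t₁ - t₂| * a ^ 2 := by
      rw [← sq_abs (t₁ - t₂), sq]
      gcongr
    have hsq₂ : (t₂ - t₃) ^ 2 * ν ^ 2 ≤ (t₂ + t₃) ^ 2 * ν ^ 2 :=
      mul_le_mul_of_nonneg_right (by nlinarith) (sq_nonneg ν)
    calc (√s - √u) ^ 2 ≤ (s - u) ^ 2 / ((t₂ + t₃) / 4) :=
          sqrt_sub_sqrt_sq_le_div hs hu₀ (by positivity) hm
      _ ≤ _ := by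
        rw [div_le_iff₀ (by positivity), hsu]
        nlinarith [sq_nonneg ((t₁ - t₂) * a - (t₂ - t₃) * ν)]

def hardP (ν a : ℝ) : Fin 3 → ℝ := ![a, (1 + ν) / 2 - a, (1 - ν) / 2]

def hardQ (ν : ℝ) : Fin 3 → ℝ := ![0, (1 - ν) / 2, (1 + ν) / 2]

section HardPair

variable {ν a : ℝ}

lemma isDist_hardP (ha : 0 ≤ a) (haν : a ≤ ν) (hν : ν ≤ 1) : IsDist (hardP ν a) := by
  refine ⟨fun i => ?_, ?_⟩
  · fin_cases i <;> simp [hardP] <;> linarith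
  · simp [hardP, Fin.sum_univ_three]
    ring

lemma isDist_hardQ (hν : 0 ≤ ν) (hν1 : ν ≤ 1) : IsDist (hardQ ν) := by
  refine ⟨fun i => ?_, ?_⟩
  · fin_cases i <;> simp [hardQ] <;> linarith
  · simp [hardQ, Fin.sum_univ_three]
    ring

lemma tvDist_hardP_hardQ (ha : 0 ≤ a) (haν : a ≤ ν) : tvDist (hardP ν a) (hardQ ν) = ν := by
  have hν : 0 ≤ ν := ha.trans haν
  simp only [tvDist, hardP, hardQ, Fin.sum_univ_three, Matrix.cons_val_zero, Matrix.cons_val_one,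
    Matrix.cons_val_two, Matrix.head_cons, Matrix.tail_cons]
  rw [show (1 + ν) / 2 - a - (1 - ν) / 2 = ν - a by ring,
    show (1 - ν) / 2 - (1 + ν) / 2 = -ν by ring, sub_zero, abs_neg, abs_of_nonneg ha,
    abs_of_nonneg (sub_nonneg.2 haν), abs_of_nonneg hν]
  ring

lemma hellingerSq_hardP_hardQ (ha : 0 ≤ a) :
    hellingerSq (hardP ν a) (hardQ ν) =
      a + (√((1 + ν) / 2 - a) - √((1 - ν) / 2)) ^ 2 + (√((1 - ν) / 2) - √((1 + ν) / 2)) ^ 2 := by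
  simp [hellingerSq, hardP, hardQ, Fin.sum_univ_three, sq_sqrt ha]

end HardPair

lemma exists_hellingerSq_hardP_hardQ_eq {ρ ν : ℝ} (hν : ν ≤ 1 / 2)
    (hνρ : 2 * ν ^ 2 ≤ ρ) (hρν : ρ ≤ ν) :
    ∃ a, 0 ≤ a ∧ a ≤ ν ∧ ρ / 6 ≤ a ∧ a ≤ ρ ∧ hellingerSq (hardP ν a) (hardQ ν) = ρ := by
  have hν₀ : 0 ≤ ν := by nlinarith
  set K := (√((1 - ν) / 2) - √((1 + ν) / 2)) ^ 2 with hK_def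
  set g : ℝ → ℝ := fun a => a + (√((1 + ν) / 2 - a) - √((1 - ν) / 2)) ^ 2 + K
  have hK : K ≤ 2 * ν ^ 2 / 3 := by
    have hm := add_add_two_mul_min_le_sqrt_add_sqrt_sq (x := (1 - ν) / 2) (y := (1 + ν) / 2)
      (by linarith) (by linarith)
    rw [min_eq_left (by linarith)] at hm
    calc K ≤ ((1 - ν) / 2 - (1 + ν) / 2) ^ 2 / (3 / 2) :=
          sqrt_sub_sqrt_sq_le_div (by linarith) (by linarith) (by norm_num) (by linarith)
      _ = 2 * ν ^ 2 / 3 := by ring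
  have hg₀ : g 0 ≤ ρ := by
    have hK₀ : (√((1 + ν) / 2 - 0) - √((1 - ν) / 2)) ^ 2 = K := by
      rw [sub_zero, hK_def]
      ring
    simp only [g, hK₀]
    linarith [sq_nonneg ν]
  have hgν : ρ ≤ g ν := by
    simp only [g, show (1 + ν) / 2 - ν = (1 - ν) / 2 by ring, sub_self]
    linarith [sq_nonneg (√((1 - ν) / 2) - √((1 + ν) / 2))]
  obtain ⟨a, ⟨ha, haν⟩, hga⟩ :=
    intermediate_value_Icc hν₀ (by fun_prop : Continuous g).continuousOn ⟨hg₀, hgν⟩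
  have ht : (√((1 + ν) / 2 - a) - √((1 - ν) / 2)) ^ 2 ≤ ν ^ 2 := by
    have hm := add_add_two_mul_min_le_sqrt_add_sqrt_sq (x := (1 + ν) / 2 - a) (y := (1 - ν) / 2)
      (by linarith) (by linarith)
    rw [min_eq_right (by linarith)] at hm
    calc _ ≤ ((1 + ν) / 2 - a - (1 - ν) / 2) ^ 2 / 1 :=
          sqrt_sub_sqrt_sq_le_div (by linarith) (by linarith) one_pos (by linarith)
      _ ≤ ν ^ 2 := by rw [div_one]; nlinarith
  refine ⟨a, ha, haν, ?_, ?_, (hellingerSq_hardP_hardQ ha).trans hga⟩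
  · linarith
  · linarith [sq_nonneg (√((1 + ν) / 2 - a) - √((1 - ν) / 2)),
      sq_nonneg (√((1 - ν) / 2) - √((1 + ν) / 2))]

lemma hellingerSq_mulVec_hardP_hardQ_le {ε ν a : ℝ} (hε : 0 ≤ ε) (ha : 0 ≤ a) (haν : a ≤ ν)
    (hν : ν ≤ 1 / 2) {T : Matrix (Fin 3) (Fin 3) ℝ} (hT : IsLDP ε T) :
    hellingerSq (T *ᵥ hardP ν a) (T *ᵥ hardQ ν) ≤ 16 * exp ε * a ^ 2 + 16 * ν ^ 2 := by
  obtain ⟨⟨hT₀, hT₁⟩, hT⟩ := hT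
  have hP : ∀ r, (T *ᵥ hardP ν a) r =
      T r 0 * a + T r 1 * ((1 + ν) / 2 - a) + T r 2 * ((1 - ν) / 2) := by
    intro r
    simp [Matrix.mulVec, dotProduct, Fin.sum_univ_three, hardP]
  have hQ : ∀ r, (T *ᵥ hardQ ν) r = T r 1 * ((1 - ν) / 2) + T r 2 * ((1 + ν) / 2) := by
    intro r
    simp [Matrix.mulVec, dotProduct, Fin.sum_univ_three, hardQ]
  have hrow : ∀ r, (√((T *ᵥ hardP ν a) r) - √((T *ᵥ hardQ ν) r)) ^ 2 ≤
      8 * exp ε * a ^ 2 * (T r 0 + T r 1) + 8 * ν ^ 2 * (T r 1 + T r 2) := by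
    intro r
    refine (sqrt_sub_sqrt_sq_le_of_ldp_row (a := a) (ν := ν) (one_le_exp hε)
      (hT₀ r 0) (hT₀ r 1) (hT₀ r 2) (hT r 0 1) ?_ ?_ ?_).trans ?_
    · rw [hP]
      nlinarith [hT₀ r 0, hT₀ r 1, hT₀ r 2]
    · rw [hQ]
      nlinarith [hT₀ r 1, hT₀ r 2]
    · rw [hP, hQ]
      ring
    · gcongr
      exact abs_sub_le_iff.2 ⟨by linarith [hT₀ r 1], by linarith [hT₀ r 0]⟩
  calc hellingerSq (T *ᵥ hardP ν a) (T *ᵥ hardQ ν)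
      ≤ ∑ r, (8 * exp ε * a ^ 2 * (T r 0 + T r 1) + 8 * ν ^ 2 * (T r 1 + T r 2)) :=
        Finset.sum_le_sum fun r _ => hrow r
    _ = 16 * exp ε * a ^ 2 + 16 * ν ^ 2 := by
        simp only [Finset.sum_add_distrib, ← Finset.mul_sum, hT₁]
        ring

def twoRowChannel {k : ℕ} (v : Fin k → ℝ) : Matrix (Fin 3) (Fin k) ℝ :=
  Matrix.of ![v, 1 - v, 0]

section TwoRowChannel

variable {k : ℕ} {v : Fin k → ℝ}

lemma isLDP_twoRowChannel {ε m M : ℝ} (hv : ∀ c, m ≤ v c ∧ v c ≤ M) (hm : 0 ≤ m) (hM : M ≤ 1)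
    (hMm : M ≤ exp ε * m) (hmM : 1 - m ≤ exp ε * (1 - M)) : IsLDP ε (twoRowChannel v) := by
  have hE := exp_pos ε
  refine ⟨⟨fun r c => ?_, fun c => ?_⟩, fun r c c' => ?_⟩
  · obtain ⟨hmc, hcM⟩ := hv c
    fin_cases r <;> simp [twoRowChannel] <;> linarith
  · simp [twoRowChannel, Fin.sum_univ_three]
  · obtain ⟨hmc, hcM⟩ := hv c
    obtain ⟨hmc', hc'M⟩ := hv c'
    fin_cases r <;> simp [twoRowChannel] <;> nlinarith

lemma div_le_hellingerSq_twoRowChannel (hv : ∀ c, 0 ≤ v c) {p q : Fin k → ℝ} (hp : ∀ i, 0 ≤ p i)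
    (hq : ∀ i, 0 ≤ q i) :
    (v ⬝ᵥ p - v ⬝ᵥ q) ^ 2 / (2 * (v ⬝ᵥ p + v ⬝ᵥ q)) ≤
      hellingerSq (twoRowChannel v *ᵥ p) (twoRowChannel v *ᵥ q) :=
  calc _ ≤ (√(v ⬝ᵥ p) - √(v ⬝ᵥ q)) ^ 2 :=
        div_le_sqrt_sub_sqrt_sq (dotProduct_nonneg_of_nonneg hv hp)
          (dotProduct_nonneg_of_nonneg hv hq)
    _ ≤ _ := sqrt_sub_sqrt_sq_le_hellingerSq (twoRowChannel v *ᵥ p) (twoRowChannel v *ᵥ q) 0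

end TwoRowChannel

section HardPairChannels

variable {ε ν a : ℝ}

lemma isLDP_twoRowChannel_tv (hE : 2 ≤ exp ε) : IsLDP ε (twoRowChannel ![2 / 3, 2 / 3, 1 / 3]) :=
  isLDP_twoRowChannel (m := 1 / 3) (M := 2 / 3) (fun c => by fin_cases c <;> norm_num)
    (by norm_num) (by norm_num) (by linarith) (by linarith)

lemma isLDP_twoRowChannel_rr (hE : 2 ≤ exp ε) :
    IsLDP ε (twoRowChannel ![1 / 2, (2 * exp ε)⁻¹, (2 * exp ε)⁻¹]) := by
  have hw : (exp ε)⁻¹ ≤ 1 := inv_le_one_of_one_le₀ (by linarith)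
  have hw₀ : 0 < (2 * exp ε)⁻¹ := by positivity
  refine isLDP_twoRowChannel (m := (2 * exp ε)⁻¹) (M := 1 / 2)
    (fun c => by fin_cases c <;> simp [hw]) hw₀.le (by norm_num) ?_ (by linarith)
  rw [mul_inv, ← mul_assoc, mul_comm (exp ε), mul_assoc, mul_inv_cancel₀ (exp_pos ε).ne']
  norm_num

lemma sq_div_le_hellingerSq_twoRowChannel_tv (hp : IsDist (hardP ν a)) (hq : IsDist (hardQ ν)) :
    ν ^ 2 / 18 ≤ hellingerSq (twoRowChannel ![2 / 3, 2 / 3, 1 / 3] *ᵥ hardP ν a)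
      (twoRowChannel ![2 / 3, 2 / 3, 1 / 3] *ᵥ hardQ ν) := by
  refine le_of_eq_of_le ?_
    (div_le_hellingerSq_twoRowChannel (fun c => by fin_cases c <;> norm_num) hp.1 hq.1)
  simp [dotProduct, Fin.sum_univ_three, hardP, hardQ]
  ring

lemma sq_div_le_hellingerSq_twoRowChannel_rr (hE : 2 ≤ exp ε) (ha : 0 ≤ a) (hEa : exp ε * a ≤ 1)
    (hp : IsDist (hardP ν a)) (hq : IsDist (hardQ ν)) :
    exp ε * a ^ 2 / 48 ≤
      hellingerSq (twoRowChannel ![1 / 2, (2 * exp ε)⁻¹, (2 * exp ε)⁻¹] *ᵥ hardP ν a)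
        (twoRowChannel ![1 / 2, (2 * exp ε)⁻¹, (2 * exp ε)⁻¹] *ᵥ hardQ ν) := by
  refine le_trans ?_ (div_le_hellingerSq_twoRowChannel
    (fun c => by fin_cases c <;> simp <;> positivity) hp.1 hq.1)
  set w := (2 * exp ε)⁻¹ with hw
  have hEw : exp ε * w = 1 / 2 := by
    rw [hw]
    field_simp
  have hw₀ : 0 < w := by positivity
  have hw₄ : w ≤ 1 / 4 := by nlinarith
  have hvp : ![1 / 2, w, w] ⬝ᵥ hardP ν a = a / 2 + w * (1 - a) := by
    simp [dotProduct, Fin.sum_univ_three, hardP]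
    ring
  have hvq : ![1 / 2, w, w] ⬝ᵥ hardQ ν = w := by
    simp [dotProduct, Fin.sum_univ_three, hardQ]
    ring
  have hden : exp ε * (a + 2 * w * (2 - a)) ≤ 3 := by nlinarith
  rw [hvp, hvq, le_div_iff₀ (by nlinarith)]
  calc exp ε * a ^ 2 / 48 * (2 * (a / 2 + w * (1 - a) + w))
      = a ^ 2 * (exp ε * (a + 2 * w * (2 - a))) / 48 := by ring
    _ ≤ a ^ 2 * (1 / 16) := by linarith [mul_le_mul_of_nonneg_left hden (sq_nonneg a)]
    _ ≤ a ^ 2 * (1 / 2 - w) ^ 2 := by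
        gcongr
        nlinarith
    _ = (a / 2 + w * (1 - a) - w) ^ 2 := by ring

end HardPairChannels

/-- Sample complexity lower bound for general (ternary) distributions:
hard instances with prescribed Hellinger divergence and total variation distance. -/
theorem stmt2 :
    ∃ c₀ c C : ℝ, 0 < c₀ ∧ 0 < c ∧ c ≤ C ∧
      ∀ ρ ν : ℝ, 0 < ρ → ρ < 1 / 2 → 0 < ν → ν < 1 / 2 → 2 * ν ^ 2 ≤ ρ → ρ ≤ ν →
        ∃ p q : Fin 3 → ℝ, IsDist p ∧ IsDist q ∧
          hellingerSq p q = ρ ∧ tvDist p q = ν ∧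
          ∀ ε : ℝ, 1 ≤ ε → Real.exp ε ≤ c₀ / ρ →
            ∀ V : ℝ,
              V = sSup {x : ℝ | ∃ T : Matrix (Fin 3) (Fin 3) ℝ,
                  IsLDP ε T ∧ x = hellingerSq (T.mulVec p) (T.mulVec q)} →
              c * max (ν ^ 2) (Real.exp ε * ρ ^ 2) ≤ V ∧
              V ≤ C * max (ν ^ 2) (Real.exp ε * ρ ^ 2) := by
  refine ⟨1, 1 / 1728, 32, one_pos, by norm_num, by norm_num, ?_⟩
  intro ρ ν hρ _ hν hν2 hνρ hρν
  obtain ⟨a, ha, haν, hρa, haρ, hH⟩ := exists_hellingerSq_hardP_hardQ_eq hν2.le hνρ hρν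
  have hp := isDist_hardP ha haν (by linarith)
  have hq := isDist_hardQ hν.le (by linarith)
  refine ⟨_, _, hp, hq, hH, tvDist_hardP_hardQ ha haν, fun ε hε hερ V hV => ?_⟩
  have hE : 2 ≤ exp ε := by linarith [add_one_le_exp ε]
  have hEa : exp ε * a ≤ 1 := by
    rw [le_div_iff₀ hρ] at hερ
    nlinarith [exp_pos ε]
  have hle : ∀ x ∈ {x : ℝ | ∃ T : Matrix (Fin 3) (Fin 3) ℝ,
      IsLDP ε T ∧ x = hellingerSq (T *ᵥ hardP ν a) (T *ᵥ hardQ ν)},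
      x ≤ 32 * max (ν ^ 2) (exp ε * ρ ^ 2) := by
    rintro _ ⟨T, hT, rfl⟩
    have ha₂ : exp ε * a ^ 2 ≤ exp ε * ρ ^ 2 := by gcongr
    linarith [hellingerSq_mulVec_hardP_hardQ_le (by linarith) ha haν hν2.le hT,
      le_max_left (ν ^ 2) (exp ε * ρ ^ 2), le_max_right (ν ^ 2) (exp ε * ρ ^ 2)]
  subst hV
  refine ⟨?_, csSup_le ⟨_, _, isLDP_twoRowChannel_tv hE, rfl⟩ hle⟩
  rw [mul_max_of_nonneg _ _ (by norm_num)]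
  refine max_le ?_ ?_
  · calc 1 / 1728 * ν ^ 2 ≤ ν ^ 2 / 18 := by nlinarith [sq_nonneg ν]
      _ ≤ _ := sq_div_le_hellingerSq_twoRowChannel_tv hp hq
      _ ≤ _ := le_csSup ⟨_, hle⟩ ⟨_, isLDP_twoRowChannel_tv hE, rfl⟩
  · calc 1 / 1728 * (exp ε * ρ ^ 2) ≤ exp ε * a ^ 2 / 48 := by
          have : ρ ^ 2 ≤ 36 * a ^ 2 := by nlinarith
          nlinarith [exp_pos ε]
      _ ≤ _ := sq_div_le_hellingerSq_twoRowChannel_rr hE ha hEa hp hq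
      _ ≤ _ := le_csSup ⟨_, hle⟩ ⟨_, isLDP_twoRowChannel_rr hE, rfl⟩
end
end

section
/- There is a universal constant c > 0 such that the following holds. Let p, q be distributions on [k] with 0 < d_h²(p,q) ≤ 1/e, and set α := log(1/d_h²(p,q)) (so α ≥ 1). For every ε ≥ 1 there exists an ε-LDP channel T from [k] to [2] such that d_h²(Tp, Tq) ≥ c · max( d_TV(p,q)², (d_h²(p,q)/α) · min(1, e^ε·d_h²(p,q)/α) ). -/
/-!
Every channel used is binary randomized response on a set `S ⊆ [k]`, which reports whether
`i ∈ S` truthfully with probability `e^ε / (e^ε + 1)`. With `u = p(S)` and `v = q(S)`, the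
Hellinger divergence of its outputs is at least `e^ε (u - v)² / (32 (1 + e^ε u))`.

For the total variation term take `S = {p > q}`, so that `u - v = d_TV(p, q)`.

For the Hellinger term put `a = √p`, `b = √q` and assume, after swapping `p` and `q`, that half
of `d_h²(p, q)` sits on `{a > b}`. Sort these coordinates into dyadic buckets by the ratio
`a / (a - b) ≥ 1`. Coordinates with ratio at least `2^N` carry at most `4^(-N)` of the mass, so
with `N ≈ α` buckets some bucket `S` carries mass `H ≳ d_h²(p, q) / α`. Within one bucket
`a²`, `a² - b²` and `(a - b)²` are comparable termwise, whence `p(S) ≥ H` and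
`(p(S) - q(S))² ≥ p(S) H / 4`; the randomized-response bound then gives `H min(1, e^ε H)` up to
a constant.
-/

open scoped Classical ENNReal
open Finset

noncomputable section

theorem sq_sub_div_le_sq_sqrt_sub {x y : ℝ} (hy : 0 ≤ y) (hyx : y ≤ x) :
    (x - y) ^ 2 / (4 * x) ≤ (√x - √y) ^ 2 := by
  have hx : 0 ≤ x := hy.trans hyx
  have hfactor : x - y = (√x - √y) * (√x + √y) := by
    linear_combination Real.sq_sqrt hy - Real.sq_sqrt hx
  have hsum : (√x + √y) ^ 2 ≤ 4 * x := by
    have := Real.sqrt_le_sqrt hyx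
    nlinarith [Real.sq_sqrt hx, Real.sqrt_nonneg y]
  rw [hfactor, mul_pow]
  exact div_le_of_le_mul₀ (by positivity) (sq_nonneg _)
    (mul_le_mul_of_nonneg_left hsum (sq_nonneg _))

theorem min_one_mul_one_add_le {y : ℝ} (hy : 0 ≤ y) : min 1 y * (1 + y) ≤ 2 * y := by
  rcases le_total 1 y with h | h
  · rw [min_eq_left h]; linarith
  · rw [min_eq_right h]; nlinarith

theorem mul_min_one_div_le {E G u v : ℝ} (hE : 0 ≤ E) (hG : 0 ≤ G) (hGu : G ≤ u)
    (hgap : u * G ≤ 4 * (u - v) ^ 2) :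
    G * min 1 (E * G) / 8 ≤ E * (u - v) ^ 2 / (1 + E * u) := by
  have hu : 0 ≤ u := hG.trans hGu
  rw [div_le_div_iff₀ (by norm_num) (by positivity)]
  calc G * min 1 (E * G) * (1 + E * u) ≤ G * (min 1 (E * u) * (1 + E * u)) := by
        rw [mul_assoc]; gcongr
    _ ≤ G * (2 * (E * u)) :=
        mul_le_mul_of_nonneg_left (min_one_mul_one_add_le (by positivity)) hG
    _ = 2 * E * (u * G) := by ring
    _ ≤ 2 * E * (4 * (u - v) ^ 2) := by gcongr
    _ = E * (u - v) ^ 2 * 8 := by ring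

theorem two_le_exp_of_one_le {ε : ℝ} (hε : 1 ≤ ε) : 2 ≤ Real.exp ε := by
  linarith [Real.add_one_le_exp ε]

theorem one_div_four_pow_ceil_log_add_two_le {h : ℝ} (hh : 0 < h) :
    1 / 4 ^ (⌈Real.log (1 / h)⌉₊ + 2) ≤ h / 4 := by
  set N := ⌈Real.log (1 / h)⌉₊ + 2
  have hexp2 : 4 ≤ Real.exp 2 := by
    have : Real.exp 2 = Real.exp 1 * Real.exp 1 := by rw [← Real.exp_add]; norm_num
    nlinarith [Real.exp_one_gt_d9]
  have hpow : 4 / h ≤ 4 ^ N :=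
    calc 4 / h = 4 * Real.exp (Real.log (1 / h)) := by
          rw [Real.exp_log (by positivity)]; ring
      _ ≤ Real.exp 2 * Real.exp (Real.log (1 / h)) := by gcongr
      _ = Real.exp (Real.log (1 / h) + 2) := by rw [Real.exp_add, mul_comm]
      _ ≤ Real.exp N := Real.exp_le_exp.2 <| by
          push_cast [N]; linarith [Nat.le_ceil (Real.log (1 / h))]
      _ = Real.exp 1 ^ N := by rw [← Real.exp_nat_mul, mul_one]
      _ ≤ 4 ^ N := by gcongr; linarith [Real.exp_one_lt_d9]
  rw [div_le_div_iff₀ (by positivity) (by norm_num)]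
  linarith [(div_le_iff₀ hh).1 hpow]

theorem two_pow_log_floor_le {x : ℝ} (hx : 1 ≤ x) : (2 : ℝ) ^ Nat.log 2 ⌊x⌋₊ ≤ x := by
  have hfloor : ⌊x⌋₊ ≠ 0 := Nat.one_le_iff_ne_zero.1 ((Nat.one_le_floor_iff x).2 hx)
  calc (2 : ℝ) ^ Nat.log 2 ⌊x⌋₊ ≤ ⌊x⌋₊ := by
        exact_mod_cast Nat.pow_log_le_self 2 hfloor
    _ ≤ x := Nat.floor_le (by linarith)

theorem lt_two_pow_log_floor_succ (x : ℝ) : x < 2 ^ (Nat.log 2 ⌊x⌋₊ + 1) := by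
  calc x < ⌊x⌋₊ + 1 := Nat.lt_floor_add_one x
    _ ≤ (2 : ℝ) ^ (Nat.log 2 ⌊x⌋₊ + 1) := by
      exact_mod_cast Nat.lt_pow_succ_log_self one_lt_two ⌊x⌋₊

section DyadicBuckets

variable {ι : Type*}

theorem sum_sq_sub_eq_sum_filter_lt_add [Fintype ι] (a b : ι → ℝ) :
    ∑ i, (a i - b i) ^ 2
      = ∑ i with b i < a i, (a i - b i) ^ 2 + ∑ i with a i < b i, (b i - a i) ^ 2 := by
  rw [sum_filter, sum_filter, ← sum_add_distrib]
  refine sum_congr rfl fun i _ => ?_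
  rcases lt_trichotomy (a i) (b i) with h | h | h
  · simp [h, h.not_gt]; ring
  · simp [h]
  · simp [h, h.not_gt]

theorem sum_sq_sub_le_of_two_pow_mul_le (s : Finset ι) (a b : ι → ℝ) (N : ℕ)
    (h : ∀ i ∈ s, 0 ≤ a i - b i ∧ 2 ^ N * (a i - b i) ≤ a i) :
    ∑ i ∈ s, (a i - b i) ^ 2 ≤ (∑ i ∈ s, a i ^ 2) / 4 ^ N := by
  rw [sum_div]
  refine sum_le_sum fun i hi => ?_
  obtain ⟨hd, hle⟩ := h i hi
  rw [le_div_iff₀ (by positivity),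
    show (4 : ℝ) ^ N = (2 ^ N) ^ 2 by norm_num [← pow_mul, pow_mul']]
  nlinarith [pow_le_pow_left₀ (by positivity) hle 2]

theorem sum_sq_bounds_of_dyadic_bucket (s : Finset ι) (a b : ι → ℝ) {t : ℝ} (ht : 1 ≤ t)
    (h : ∀ i ∈ s, 0 ≤ b i ∧ t * (a i - b i) ≤ a i ∧ a i ≤ 2 * t * (a i - b i)) :
    ∑ i ∈ s, b i ^ 2 ≤ ∑ i ∈ s, a i ^ 2 ∧
      ∑ i ∈ s, (a i - b i) ^ 2 ≤ ∑ i ∈ s, a i ^ 2 ∧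
      (∑ i ∈ s, a i ^ 2) * ∑ i ∈ s, (a i - b i) ^ 2
        ≤ 4 * (∑ i ∈ s, a i ^ 2 - ∑ i ∈ s, b i ^ 2) ^ 2 := by
  have hd : ∀ i ∈ s, 0 ≤ a i - b i := fun i hi => by
    obtain ⟨-, h1, h2⟩ := h i hi
    nlinarith
  set u := ∑ i ∈ s, a i ^ 2
  set v := ∑ i ∈ s, b i ^ 2
  set H := ∑ i ∈ s, (a i - b i) ^ 2
  have hH : 0 ≤ H := sum_nonneg fun i _ => sq_nonneg _
  have hHu : H ≤ u := sum_le_sum fun i hi => by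
    obtain ⟨-, h1, -⟩ := h i hi
    exact pow_le_pow_left₀ (hd i hi) (by nlinarith [hd i hi]) 2
  have hgap : t * H ≤ u - v := by
    rw [mul_sum, ← sum_sub_distrib]
    refine sum_le_sum fun i hi => ?_
    obtain ⟨hb, h1, -⟩ := h i hi
    nlinarith [hd i hi]
  have hu : u ≤ 4 * t ^ 2 * H := by
    rw [mul_sum]
    refine sum_le_sum fun i hi => ?_
    obtain ⟨-, h1, h2⟩ := h i hi
    calc a i ^ 2 ≤ (2 * t * (a i - b i)) ^ 2 := pow_le_pow_left₀ (by nlinarith [hd i hi]) h2 2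
      _ = 4 * t ^ 2 * (a i - b i) ^ 2 := by ring
  have htH : 0 ≤ t * H := by positivity
  refine ⟨by linarith, hHu, ?_⟩
  calc u * H ≤ 4 * t ^ 2 * H * H := by gcongr
    _ = 4 * (t * H) ^ 2 := by ring
    _ ≤ 4 * (u - v) ^ 2 := by gcongr

theorem exists_finset_sum_sq_gap_ge [Fintype ι] (a b : ι → ℝ) (hb : ∀ i, 0 ≤ b i)
    (ha : ∑ i, a i ^ 2 ≤ 1) {N : ℕ} (hN : 0 < N) :
    ∃ S : Finset ι, ∑ i ∈ S, b i ^ 2 ≤ ∑ i ∈ S, a i ^ 2 ∧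
      (∑ i with b i < a i, (a i - b i) ^ 2 - 1 / 4 ^ N) / N ≤ ∑ i ∈ S, a i ^ 2 ∧
      (∑ i ∈ S, a i ^ 2) * ((∑ i with b i < a i, (a i - b i) ^ 2 - 1 / 4 ^ N) / N)
        ≤ 4 * (∑ i ∈ S, a i ^ 2 - ∑ i ∈ S, b i ^ 2) ^ 2 := by
  set G := (∑ i with b i < a i, (a i - b i) ^ 2 - 1 / 4 ^ N) / N
  set P := univ.filter fun i => b i < a i
  have hP : ∀ i ∈ P, 0 < a i - b i := fun i hi => sub_pos.2 (mem_filter.1 hi).2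
  set body := P.filter fun i => a i < 2 ^ N * (a i - b i)
  have htail : ∑ i ∈ P with ¬ a i < 2 ^ N * (a i - b i), (a i - b i) ^ 2 ≤ 1 / 4 ^ N := by
    refine (sum_sq_sub_le_of_two_pow_mul_le _ a b N fun i hi => ?_).trans ?_
    · obtain ⟨hi, hlt⟩ := mem_filter.1 hi
      exact ⟨(hP i hi).le, not_lt.1 hlt⟩
    · gcongr
      exact (sum_le_sum_of_subset_of_nonneg (subset_univ _) fun i _ _ => sq_nonneg _).trans ha
  have hbody : (N : ℝ) * G ≤ ∑ i ∈ body, (a i - b i) ^ 2 := by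
    have := sum_filter_add_sum_filter_not P (fun i => a i < 2 ^ N * (a i - b i))
      fun i => (a i - b i) ^ 2
    rw [mul_div_cancel₀ _ (by positivity)]
    linarith
  set idx : ι → ℕ := fun i => Nat.log 2 ⌊a i / (a i - b i)⌋₊
  have hbucket : ∀ i ∈ P,
      2 ^ idx i * (a i - b i) ≤ a i ∧ a i < 2 ^ (idx i + 1) * (a i - b i) := by
    intro i hi
    have hd := hP i hi
    have hratio : 1 ≤ a i / (a i - b i) := by
      rw [le_div_iff₀ hd]; linarith [hb i]
    exact ⟨(le_div_iff₀ hd).1 (two_pow_log_floor_le hratio),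
      (div_lt_iff₀ hd).1 (lt_two_pow_log_floor_succ _)⟩
  have hmaps : ∀ i ∈ body, idx i ∈ range N := by
    intro i hi
    obtain ⟨hiP, hlt⟩ := mem_filter.1 hi
    have := (hbucket i hiP).1.trans_lt hlt
    exact mem_range.2 <| (pow_lt_pow_iff_right₀ one_lt_two).1 <|
      lt_of_mul_lt_mul_right this (hP i hiP).le
  obtain ⟨j, -, hj⟩ := exists_le_sum_fiber_of_maps_to_of_nsmul_le_sum hmaps
    (w := fun i => (a i - b i) ^ 2) (b := G) (nonempty_range_iff.2 hN.ne')
    (by rwa [card_range, nsmul_eq_mul])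
  refine ⟨body.filter fun i => idx i = j, ?_⟩
  obtain ⟨hvu, hHu, hgap⟩ := sum_sq_bounds_of_dyadic_bucket (body.filter fun i => idx i = j) a b
    (t := 2 ^ j) (one_le_pow₀ one_le_two) fun i hi => by
      obtain ⟨hi', hij⟩ := mem_filter.1 hi
      obtain ⟨h1, h2⟩ := hbucket i (mem_filter.1 hi').1
      rw [hij] at h1 h2
      rw [pow_succ] at h2
      exact ⟨hb i, h1, by linarith⟩
  have hu : 0 ≤ ∑ i ∈ body with idx i = j, a i ^ 2 := sum_nonneg fun i _ => sq_nonneg _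
  exact ⟨hvu, hj.trans hHu, (mul_le_mul_of_nonneg_left hj hu).trans hgap⟩

end DyadicBuckets

section Channels

variable {k : ℕ}

theorem hellingerSq_comm (p q : Fin k → ℝ) : hellingerSq p q = hellingerSq q p :=
  sum_congr rfl fun _ _ => by ring

theorem sq_sqrt_sub_le_hellingerSq (p q : Fin k → ℝ) (i : Fin k) :
    (√(p i) - √(q i)) ^ 2 ≤ hellingerSq p q :=
  single_le_sum (f := fun i => (√(p i) - √(q i)) ^ 2) (fun _ _ => sq_nonneg _) (mem_univ i)

theorem IsDist.sum_le_one {p : Fin k → ℝ} (hp : IsDist p) (S : Finset (Fin k)) :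
    ∑ i ∈ S, p i ≤ 1 :=
  hp.2 ▸ sum_le_sum_of_subset_of_nonneg (subset_univ S) fun i _ _ => hp.1 i

theorem tvDist_eq_sum_filter_lt {p q : Fin k → ℝ} (hpq : ∑ i, p i = ∑ i, q i) :
    tvDist p q = ∑ i with q i < p i, p i - ∑ i with q i < p i, q i := by
  have hzero : ∑ i with q i < p i, (p i - q i) + ∑ i with ¬ q i < p i, (p i - q i) = 0 := by
    rw [sum_filter_add_sum_filter_not, sum_sub_distrib, hpq, sub_self]
  have habs : ∑ i, |p i - q i|
      = ∑ i with q i < p i, (p i - q i) - ∑ i with ¬ q i < p i, (p i - q i) := by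
    rw [← sum_filter_add_sum_filter_not univ (fun i => q i < p i), sub_eq_add_neg,
      ← sum_neg_distrib]
    congr 1 <;> refine sum_congr rfl fun i hi => ?_
    · exact abs_of_pos (sub_pos.2 (mem_filter.1 hi).2)
    · exact abs_of_nonpos (sub_nonpos.2 (not_lt.1 (mem_filter.1 hi).2))
  rw [tvDist, habs, ← sum_sub_distrib]
  linarith

def randomizedResponse (E : ℝ) (S : Finset (Fin k)) : Matrix (Fin 2) (Fin k) ℝ :=
  Matrix.of fun r i => if (r = 0 ↔ i ∈ S) then E / (E + 1) else 1 / (E + 1)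

theorem randomizedResponse_apply (E : ℝ) (S : Finset (Fin k)) (r : Fin 2) (i : Fin k) :
    randomizedResponse E S r i = if (r = 0 ↔ i ∈ S) then E / (E + 1) else 1 / (E + 1) :=
  rfl

theorem isLDP_randomizedResponse {ε : ℝ} (hε : 0 ≤ ε) (S : Finset (Fin k)) :
    IsLDP ε (randomizedResponse (Real.exp ε) S) := by
  have hE : 1 ≤ Real.exp ε := Real.one_le_exp hε
  have hlow : ∀ r c, 1 / (Real.exp ε + 1) ≤ randomizedResponse (Real.exp ε) S r c := by
    intro r c
    rw [randomizedResponse_apply]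
    split_ifs <;> gcongr
  have hupp : ∀ r c,
      randomizedResponse (Real.exp ε) S r c ≤ Real.exp ε / (Real.exp ε + 1) := by
    intro r c
    rw [randomizedResponse_apply]
    split_ifs <;> gcongr
  refine ⟨⟨fun r c => (hlow r c).trans' (by positivity), fun c => ?_⟩, fun r c c' => ?_⟩
  · have hsum : Real.exp ε / (Real.exp ε + 1) + (Real.exp ε + 1)⁻¹ = 1 := by field_simp
    rw [Fin.sum_univ_two]
    by_cases hc : c ∈ S <;> simp [randomizedResponse_apply, hc] <;> linarith
  · calc randomizedResponse (Real.exp ε) S r c ≤ Real.exp ε / (Real.exp ε + 1) := hupp r c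
      _ = Real.exp ε * (1 / (Real.exp ε + 1)) := by ring
      _ ≤ Real.exp ε * randomizedResponse (Real.exp ε) S r c' := by gcongr; exact hlow r c'

theorem randomizedResponse_mulVec_zero {E : ℝ} (hE : 0 ≤ E) (S : Finset (Fin k))
    {p : Fin k → ℝ} (hp : ∑ i, p i = 1) :
    (randomizedResponse E S).mulVec p 0 = (1 + (E - 1) * ∑ i ∈ S, p i) / (E + 1) := by
  have hterm : ∀ i, randomizedResponse E S 0 i * p i
      = p i / (E + 1) + if i ∈ S then (E - 1) / (E + 1) * p i else 0 := by
    intro i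
    rw [randomizedResponse_apply]
    by_cases hi : i ∈ S <;> simp [hi] <;> ring
  simp only [Matrix.mulVec, dotProduct, hterm, sum_add_distrib, ← sum_div, hp, sum_ite_mem,
    univ_inter, ← mul_sum]
  field_simp

theorem hellingerSq_randomizedResponse_ge {E : ℝ} (hE : 2 ≤ E) {p q : Fin k → ℝ}
    (hp : IsDist p) (hq : IsDist q) {S : Finset (Fin k)}
    (hqp : ∑ i ∈ S, q i ≤ ∑ i ∈ S, p i) :
    E * (∑ i ∈ S, p i - ∑ i ∈ S, q i) ^ 2 / (32 * (1 + E * ∑ i ∈ S, p i))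
      ≤ hellingerSq ((randomizedResponse E S).mulVec p) ((randomizedResponse E S).mulVec q) := by
  set T := randomizedResponse E S
  set u := ∑ i ∈ S, p i
  set v := ∑ i ∈ S, q i
  have hu : 0 ≤ u := sum_nonneg fun i _ => hp.1 i
  have hv : 0 ≤ v := sum_nonneg fun i _ => hq.1 i
  set x := T.mulVec p 0
  set y := T.mulVec q 0
  have hx : x = (1 + (E - 1) * u) / (E + 1) := randomizedResponse_mulVec_zero (by linarith) S hp.2
  have hy : y = (1 + (E - 1) * v) / (E + 1) := randomizedResponse_mulVec_zero (by linarith) S hq.2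
  have hy0 : 0 ≤ y := by
    have : 0 ≤ (E - 1) * v := by nlinarith
    rw [hy]; positivity
  have hyx : y ≤ x := by rw [hx, hy]; gcongr; linarith
  have hxy : (x - y) ^ 2 / (4 * x)
      = (E - 1) ^ 2 * (u - v) ^ 2 / (4 * (E + 1) * (1 + (E - 1) * u)) := by
    rw [hx, hy]
    field_simp
    ring
  calc E * (u - v) ^ 2 / (32 * (1 + E * u))
      ≤ (E - 1) ^ 2 * (u - v) ^ 2 / (4 * (E + 1) * (1 + (E - 1) * u)) := by
        have hA : 0 < 1 + (E - 1) * u := by nlinarith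
        rw [div_le_div_iff₀ (by positivity) (by positivity)]
        have h1 : (E + 1) * (1 + (E - 1) * u) ≤ 2 * E * (1 + E * u) := by
          nlinarith [mul_nonneg hu (sq_nonneg E)]
        have h2 : E ^ 2 ≤ 4 * (E - 1) ^ 2 := by nlinarith
        calc E * (u - v) ^ 2 * (4 * (E + 1) * (1 + (E - 1) * u))
            = 4 * E * (u - v) ^ 2 * ((E + 1) * (1 + (E - 1) * u)) := by ring
          _ ≤ 4 * E * (u - v) ^ 2 * (2 * E * (1 + E * u)) := by gcongr
          _ = 8 * (u - v) ^ 2 * (1 + E * u) * E ^ 2 := by ring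
          _ ≤ 8 * (u - v) ^ 2 * (1 + E * u) * (4 * (E - 1) ^ 2) := by gcongr
          _ = (E - 1) ^ 2 * (u - v) ^ 2 * (32 * (1 + E * u)) := by ring
    _ = (x - y) ^ 2 / (4 * x) := hxy.symm
    _ ≤ (√x - √y) ^ 2 := sq_sub_div_le_sq_sqrt_sub hy0 hyx
    _ ≤ _ := sq_sqrt_sub_le_hellingerSq (T.mulVec p) (T.mulVec q) 0

variable {p q : Fin k → ℝ} {ε : ℝ}

theorem exists_isLDP_tvDist_sq_le (hp : IsDist p) (hq : IsDist q) (hε : 1 ≤ ε) :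
    ∃ T : Matrix (Fin 2) (Fin k) ℝ, IsLDP ε T ∧
      tvDist p q ^ 2 / 64 ≤ hellingerSq (T.mulVec p) (T.mulVec q) := by
  set S := univ.filter fun i => q i < p i
  have hqp : ∑ i ∈ S, q i ≤ ∑ i ∈ S, p i := sum_le_sum fun i hi => (mem_filter.1 hi).2.le
  refine ⟨randomizedResponse (Real.exp ε) S, isLDP_randomizedResponse (by linarith) S,
    le_trans ?_ (hellingerSq_randomizedResponse_ge (two_le_exp_of_one_le hε) hp hq hqp)⟩
  rw [← tvDist_eq_sum_filter_lt (hp.2.trans hq.2.symm)]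
  have hE := two_le_exp_of_one_le hε
  have hu := hp.sum_le_one S
  have hu0 : 0 ≤ ∑ i ∈ S, p i := sum_nonneg fun i _ => hp.1 i
  rw [div_le_div_iff₀ (by norm_num) (by positivity)]
  calc tvDist p q ^ 2 * (32 * (1 + Real.exp ε * ∑ i ∈ S, p i))
      ≤ tvDist p q ^ 2 * (32 * (2 * Real.exp ε)) := by gcongr; nlinarith
    _ = Real.exp ε * tvDist p q ^ 2 * 64 := by ring

theorem exists_isLDP_hellingerSq_ge_of_half (hp : IsDist p) (hq : IsDist q)
    (hpos : 0 < hellingerSq p q) (hle : hellingerSq p q ≤ 1 / Real.exp 1) (hε : 1 ≤ ε)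
    (hhalf : hellingerSq p q / 2 ≤ ∑ i with √(q i) < √(p i), (√(p i) - √(q i)) ^ 2) :
    ∃ T : Matrix (Fin 2) (Fin k) ℝ, IsLDP ε T ∧
      hellingerSq p q / Real.log (1 / hellingerSq p q)
          * min 1 (Real.exp ε * (hellingerSq p q / Real.log (1 / hellingerSq p q))) / 2 ^ 16
        ≤ hellingerSq (T.mulVec p) (T.mulVec q) := by
  set h := hellingerSq p q
  set α := Real.log (1 / h)
  set E := Real.exp ε
  have hα : 1 ≤ α := by
    rw [Real.le_log_iff_exp_le (by positivity), le_div_iff₀ hpos]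
    rwa [le_div_iff₀ (Real.exp_pos 1), mul_comm] at hle
  set N := ⌈α⌉₊ + 2
  have hN : (N : ℝ) ≤ 4 * α := by
    have := Nat.ceil_lt_add_one (zero_le_one.trans hα)
    push_cast [N]
    linarith
  have hsq : ∀ {r : Fin k → ℝ}, IsDist r →
      ∀ s : Finset (Fin k), ∑ i ∈ s, √(r i) ^ 2 = ∑ i ∈ s, r i :=
    fun hr s => sum_congr rfl fun i _ => Real.sq_sqrt (hr.1 i)
  obtain ⟨S, hqp, hGu, hgap⟩ := exists_finset_sum_sq_gap_ge (fun i => √(p i))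
    (fun i => √(q i)) (fun i => Real.sqrt_nonneg _) (by rw [hsq hp, hp.2]) (N := N) (by omega)
  simp only [hsq hp, hsq hq] at hqp hGu hgap
  set G := (∑ i with √(q i) < √(p i), (√(p i) - √(q i)) ^ 2 - 1 / 4 ^ N) / N
  have hmG : h / α / 16 ≤ G := by
    have htail := one_div_four_pow_ceil_log_add_two_le hpos
    calc h / α / 16 = h / 4 / (4 * α) := by ring
      _ ≤ h / 4 / N := by gcongr
      _ ≤ G := div_le_div_of_nonneg_right (by linarith) N.cast_nonneg
  have hm : 0 ≤ h / α / 16 := by positivity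
  have hu : 0 ≤ ∑ i ∈ S, p i := sum_nonneg fun i _ => hp.1 i
  refine ⟨randomizedResponse E S, isLDP_randomizedResponse (by linarith) S,
    le_trans ?_ (hellingerSq_randomizedResponse_ge (two_le_exp_of_one_le hε) hp hq hqp)⟩
  have hbound := mul_min_one_div_le (Real.exp_pos ε).le hm (hmG.trans hGu)
    ((mul_le_mul_of_nonneg_left hmG hu).trans hgap)
  have hmin : min 1 (E * (h / α)) / 16 ≤ min 1 (E * (h / α / 16)) := by
    rw [← min_div_div_right (by norm_num), mul_div_assoc]
    exact min_le_min_right _ (by norm_num)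
  calc h / α * min 1 (E * (h / α)) / 2 ^ 16
      = h / α / 16 * (min 1 (E * (h / α)) / 16) / 8 / 32 := by ring
    _ ≤ h / α / 16 * min 1 (E * (h / α / 16)) / 8 / 32 := by gcongr
    _ ≤ E * (∑ i ∈ S, p i - ∑ i ∈ S, q i) ^ 2 / (1 + E * ∑ i ∈ S, p i) / 32 := by
        gcongr
    _ = _ := by rw [div_div, mul_comm _ (32 : ℝ)]

theorem exists_isLDP_hellingerSq_ge (hp : IsDist p) (hq : IsDist q)
    (hpos : 0 < hellingerSq p q) (hle : hellingerSq p q ≤ 1 / Real.exp 1) (hε : 1 ≤ ε) :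
    ∃ T : Matrix (Fin 2) (Fin k) ℝ, IsLDP ε T ∧
      hellingerSq p q / Real.log (1 / hellingerSq p q)
          * min 1 (Real.exp ε * (hellingerSq p q / Real.log (1 / hellingerSq p q))) / 2 ^ 16
        ≤ hellingerSq (T.mulVec p) (T.mulVec q) := by
  have hsplit := sum_sq_sub_eq_sum_filter_lt_add (fun i => √(p i)) (fun i => √(q i))
  rcases le_or_gt (hellingerSq p q / 2) (∑ i with √(q i) < √(p i), (√(p i) - √(q i)) ^ 2)
    with hhalf | hhalf
  · exact exists_isLDP_hellingerSq_ge_of_half hp hq hpos hle hε hhalf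
  · obtain ⟨T, hT, hbound⟩ := exists_isLDP_hellingerSq_ge_of_half hq hp
      (by rwa [hellingerSq_comm]) (by rwa [hellingerSq_comm]) hε
      (by rw [hellingerSq_comm]; unfold hellingerSq at hhalf ⊢; linarith)
    exact ⟨T, hT, by rwa [hellingerSq_comm q p, hellingerSq_comm (T.mulVec q)] at hbound⟩

end Channels

/-- Sample complexity upper bound via an efficient binary-output `ε`-LDP channel. -/
theorem stmt3 :
    ∃ c : ℝ, 0 < c ∧
      ∀ (k : ℕ) (p q : Fin k → ℝ), IsDist p → IsDist q →
        0 < hellingerSq p q → hellingerSq p q ≤ 1 / Real.exp 1 →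
        ∀ ε : ℝ, 1 ≤ ε →
          ∃ T : Matrix (Fin 2) (Fin k) ℝ, IsLDP ε T ∧
            c * max (tvDist p q ^ 2)
                ((hellingerSq p q / Real.log (1 / hellingerSq p q)) *
                  min 1 (Real.exp ε * hellingerSq p q / Real.log (1 / hellingerSq p q)))
              ≤ hellingerSq (T.mulVec p) (T.mulVec q) := by
  refine ⟨1 / 2 ^ 16, by norm_num, fun k p q hp hq hpos hle ε hε => ?_⟩
  obtain ⟨T₁, hT₁, htv⟩ := exists_isLDP_tvDist_sq_le hp hq hε
  obtain ⟨T₂, hT₂, hhel⟩ := exists_isLDP_hellingerSq_ge hp hq hpos hle hε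
  rw [mul_div_assoc]
  rcases le_total (tvDist p q ^ 2) (hellingerSq p q / Real.log (1 / hellingerSq p q) *
      min 1 (Real.exp ε * (hellingerSq p q / Real.log (1 / hellingerSq p q)))) with hmax | hmax
  · exact ⟨T₂, hT₂, by rw [max_eq_right hmax]; linarith⟩
  · exact ⟨T₁, hT₁, by rw [max_eq_left hmax]; linarith [sq_nonneg (tvDist p q)]⟩
end
end

section
/- Let p, q be distributions on [k] with p_i + q_i > 0 for all i, and let ℓ ≥ 1. Let A := {(Tp, Tq) : T ∈ T_{ℓ,k}}, a subset of ℝ^ℓ × ℝ^ℓ. For any T ∈ T_{ℓ,k}: if (Tp, Tq) is an extreme point of A, then T is a threshold channel for (p,q); in particular, T is deterministic. -/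
open scoped Classical ENNReal
open Finset

noncomputable section

/-- The deterministic channel induced by a map `f : [k] → [ℓ]`. -/
def detChannel {k ℓ : ℕ} (f : Fin k → Fin ℓ) : Matrix (Fin ℓ) (Fin k) ℝ :=
  fun r c => if r = f c then 1 else 0

/-- Likelihood ratio `p_i / q_i`, taken to be `+∞` when `q_i = 0`. -/
def lr {k : ℕ} (p q : Fin k → ℝ) (i : Fin k) : EReal :=
  if q i = 0 then ⊤ else ((p i / q i : ℝ) : EReal)

/-- `T` is a threshold channel for `(p, q)`: it is deterministic, induced by a map `f`,
and whenever `p_u/q_u < p_v/q_v` and `f u = f v`, every `w` whose likelihood ratio lies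
strictly between those of `u` and `v` satisfies `f w = f u`. -/
def IsThresholdChannel {k ℓ : ℕ} (p q : Fin k → ℝ) (T : Matrix (Fin ℓ) (Fin k) ℝ) : Prop :=
  ∃ f : Fin k → Fin ℓ, T = detChannel f ∧
    ∀ u v w : Fin k, lr p q u < lr p q v → f u = f v →
      lr p q u < lr p q w → lr p q w < lr p q v → f w = f u

/-
If a column `c` of `T` has two positive entries, moving a little mass of column `c` between those
two rows, in either direction, gives two channels whose images average to `(Tp, Tq)`. Extremality
forces the moved mass to be invisible to `p` and `q`, which `p c + q c > 0` rules out; so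
`T = detChannel f` is deterministic. If `f u = f v ≠ f w` while the likelihood ratio of `w` lies
strictly between those of `u` and `v`, then `β (p w, q w) = α (p u, q u) + γ (p v, q v)` with
`α, β, γ > 0`. Exchanging mass `α` of `u` against mass `β` of `w` between the cells `f u` and `f w`
is one channel, sending mass `γ` of `v` to `f w` is another, and their images again average to
`(Tp, Tq)`; but the first moves `(α p u - β p w, α q u - β q w) ≠ 0`, since `u` and `w` have
different likelihood ratios.
-/

namespace ChannelExtreme

variable {k ℓ : ℕ}

def channelRange (p q : Fin k → ℝ) : Set ((Fin ℓ → ℝ) × (Fin ℓ → ℝ)) :=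
  {z | ∃ T : Matrix (Fin ℓ) (Fin k) ℝ, IsChannel T ∧ z = (T.mulVec p, T.mulVec q)}

/-- Moves mass `c y` from row `r` to row `s` in every column `y`. -/
def transfer (r s : Fin ℓ) (c : Fin k → ℝ) : Matrix (Fin ℓ) (Fin k) ℝ :=
  Matrix.vecMulVec (Pi.single s 1 - Pi.single r 1) c

lemma transfer_mulVec (r s : Fin ℓ) (c v : Fin k → ℝ) :
    (transfer r s c).mulVec v = (c ⬝ᵥ v) • (Pi.single s 1 - Pi.single r 1) := by
  rw [transfer, Matrix.vecMulVec_mulVec, op_smul_eq_smul]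

lemma transfer_add (r s : Fin ℓ) (c₁ c₂ : Fin k → ℝ) :
    transfer r s c₁ + transfer r s c₂ = transfer r s (c₁ + c₂) :=
  (Matrix.vecMulVec_add _ _ _).symm

lemma isChannel_add_transfer {T : Matrix (Fin ℓ) (Fin k) ℝ} (hT : IsChannel T) {r s : Fin ℓ}
    (hrs : r ≠ s) {c : Fin k → ℝ} (hr : c ≤ T r) (hs : -c ≤ T s) :
    IsChannel (T + transfer r s c) := by
  refine ⟨fun x y => ?_, fun y => ?_⟩
  · by_cases hxs : x = s
    · subst hxs
      simpa [transfer, Matrix.vecMulVec_apply, hrs] using neg_le_iff_add_nonneg.1 (hs y)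
    by_cases hxr : x = r
    · subst hxr
      simpa [transfer, Matrix.vecMulVec_apply, hrs.symm, ← sub_eq_add_neg] using sub_nonneg.2 (hr y)
    · simpa [transfer, Matrix.vecMulVec_apply, hxs, hxr] using hT.1 x y
  · simp [transfer, Matrix.vecMulVec_apply, Finset.sum_add_distrib, ← Finset.sum_mul, hT.2 y]

lemma mulVec_eq_zero_of_mem_extremePoints {p q : Fin k → ℝ} {T D₁ D₂ : Matrix (Fin ℓ) (Fin k) ℝ}
    (hext : (T.mulVec p, T.mulVec q) ∈ (channelRange p q).extremePoints ℝ)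
    (h₁ : IsChannel (T + D₁)) (h₂ : IsChannel (T + D₂))
    (hp : (D₁ + D₂).mulVec p = 0) (hq : (D₁ + D₂).mulVec q = 0) :
    D₁.mulVec p = 0 ∧ D₁.mulVec q = 0 := by
  have hmid : (T.mulVec p, T.mulVec q) ∈ openSegment ℝ
      ((T + D₁).mulVec p, (T + D₁).mulVec q) ((T + D₂).mulVec p, (T + D₂).mulVec q) := by
    refine ⟨1 / 2, 1 / 2, by norm_num, by norm_num, by norm_num, ?_⟩
    rw [Matrix.add_mulVec] at hp hq
    simp only [Matrix.add_mulVec, Prod.smul_mk, Prod.mk_add_mk, Prod.mk.injEq]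
    constructor
    · linear_combination (norm := module) (1 / 2 : ℝ) • hp
    · linear_combination (norm := module) (1 / 2 : ℝ) • hq
  have h := hext.2 ⟨_, h₁, rfl⟩ ⟨_, h₂, rfl⟩ hmid
  simp only [Prod.mk.injEq, Matrix.add_mulVec, add_eq_left] at h
  exact h

lemma dotProduct_eq_zero_of_mem_extremePoints {p q : Fin k → ℝ} {T : Matrix (Fin ℓ) (Fin k) ℝ}
    (hext : (T.mulVec p, T.mulVec q) ∈ (channelRange p q).extremePoints ℝ)
    {r s : Fin ℓ} (hrs : r ≠ s) {c₁ c₂ : Fin k → ℝ}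
    (h₁ : IsChannel (T + transfer r s c₁)) (h₂ : IsChannel (T + transfer r s c₂))
    (hp : (c₁ + c₂) ⬝ᵥ p = 0) (hq : (c₁ + c₂) ⬝ᵥ q = 0) :
    c₁ ⬝ᵥ p = 0 ∧ c₁ ⬝ᵥ q = 0 := by
  have hdir : (Pi.single s 1 - Pi.single r 1 : Fin ℓ → ℝ) ≠ 0 := fun h => by
    simpa [hrs.symm] using congrFun h s
  have h := mulVec_eq_zero_of_mem_extremePoints hext h₁ h₂
    (by rw [transfer_add, transfer_mulVec, hp, zero_smul])
    (by rw [transfer_add, transfer_mulVec, hq, zero_smul])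
  simpa only [transfer_mulVec, smul_eq_zero, hdir, or_false] using h

lemma eq_of_pos_of_pos_of_mem_extremePoints {p q : Fin k → ℝ} (hpq : ∀ i, 0 < p i + q i)
    {T : Matrix (Fin ℓ) (Fin k) ℝ} (hT : IsChannel T)
    (hext : (T.mulVec p, T.mulVec q) ∈ (channelRange p q).extremePoints ℝ)
    {c : Fin k} {r₁ r₂ : Fin ℓ} (h₁ : 0 < T r₁ c) (h₂ : 0 < T r₂ c) : r₁ = r₂ := by
  by_contra hne
  set m := min (T r₁ c) (T r₂ c)
  have hm : 0 < m := lt_min h₁ h₂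
  set e : Fin k → ℝ := Pi.single c m
  have single_le {r : Fin ℓ} (hr : m ≤ T r c) (y : Fin k) : e y ≤ T r y := by
    rcases eq_or_ne y c with rfl | hy
    · simpa [e] using hr
    · simpa [e, hy] using hT.1 r y
  have neg_single_le (r : Fin ℓ) (y : Fin k) : -e y ≤ T r y :=
    (neg_nonpos.2 (Pi.single_nonneg.2 hm.le : 0 ≤ e) y).trans (hT.1 r y)
  have hup := isChannel_add_transfer hT hne (single_le (min_le_left _ _)) (neg_single_le r₂)
  have hdown := isChannel_add_transfer hT hne (c := -e) (neg_single_le r₁)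
    (fun y => by simpa using single_le (min_le_right _ _) y)
  obtain ⟨hpc, hqc⟩ :=
    dotProduct_eq_zero_of_mem_extremePoints hext hne hup hdown (by simp) (by simp)
  rw [single_dotProduct, mul_eq_zero] at hpc hqc
  linarith [hpq c, hpc.resolve_left hm.ne', hqc.resolve_left hm.ne']

lemma exists_eq_detChannel {T : Matrix (Fin ℓ) (Fin k) ℝ} (hT : IsChannel T)
    (huniq : ∀ c r₁ r₂, 0 < T r₁ c → 0 < T r₂ c → r₁ = r₂) : ∃ f, T = detChannel f := by
  have hpos (c : Fin k) : ∃ r, 0 < T r c := by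
    by_contra! h
    linarith [hT.2 c, Finset.sum_nonpos fun r (_ : r ∈ Finset.univ) => h r]
  choose f hf using hpos
  have hzero (c : Fin k) (r : Fin ℓ) (hr : r ≠ f c) : T r c = 0 :=
    (hT.1 r c).eq_or_lt.elim Eq.symm fun h => absurd (huniq c r (f c) h (hf c)) hr
  refine ⟨f, Matrix.ext fun r c => ?_⟩
  unfold detChannel
  split_ifs with h
  · subst h
    rw [← hT.2 c, Finset.sum_eq_single (f c) (fun r _ hr => hzero c r hr) (by simp)]
  · exact hzero c r h

lemma isChannel_detChannel (f : Fin k → Fin ℓ) : IsChannel (detChannel f) :=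
  ⟨fun r c => by unfold detChannel; split_ifs <;> norm_num, fun c => by simp [detChannel]⟩

lemma mul_lt_mul_of_lr_lt {p q : Fin k → ℝ} (hq : ∀ i, 0 ≤ q i) (hpq : ∀ i, 0 < p i + q i)
    {i j : Fin k} (h : lr p q i < lr p q j) : p i * q j < p j * q i := by
  unfold lr at h
  rcases (hq i).eq_or_lt with hqi | hqi
  · simp [← hqi] at h
  rcases (hq j).eq_or_lt with hqj | hqj
  · rw [← hqj, mul_zero]
    exact mul_pos (by simpa [← hqj] using hpq j) hqi
  · rwa [if_neg hqi.ne', if_neg hqj.ne', EReal.coe_lt_coe_iff, div_lt_div_iff₀ hqi hqj] at h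

lemma exists_weights_of_lr_lt_lt {p q : Fin k → ℝ} (hq : ∀ i, 0 ≤ q i)
    (hpq : ∀ i, 0 < p i + q i) {u v w : Fin k} (huw : lr p q u < lr p q w)
    (hwv : lr p q w < lr p q v) :
    ∃ α β γ : ℝ, 0 < α ∧ α ≤ 1 ∧ 0 < β ∧ β ≤ 1 ∧ 0 < γ ∧ γ ≤ 1 ∧
      α * p u + γ * p v = β * p w ∧ α * q u + γ * q v = β * q w := by
  have ha : 0 < p v * q w - p w * q v := sub_pos.2 (mul_lt_mul_of_lr_lt hq hpq hwv)
  have hb : 0 < p v * q u - p u * q v := sub_pos.2 (mul_lt_mul_of_lr_lt hq hpq (huw.trans hwv))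
  have hg : 0 < p w * q u - p u * q w := sub_pos.2 (mul_lt_mul_of_lr_lt hq hpq huw)
  -- The cross products are the Cramer coefficients of `(p w, q w)` in terms of `(p u, q u)`
  -- and `(p v, q v)`.
  set a := p v * q w - p w * q v
  set b := p v * q u - p u * q v
  set g := p w * q u - p u * q w
  have hs : 0 < a + b + g := by positivity
  refine ⟨a / (a + b + g), b / (a + b + g), g / (a + b + g), by positivity,
    (div_le_one hs).2 (by linarith), by positivity, (div_le_one hs).2 (by linarith),
    by positivity, (div_le_one hs).2 (by linarith), ?_, ?_⟩
  · field_simp; ring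
  · field_simp; ring

lemma single_le_detChannel (f : Fin k → Fin ℓ) (y₀ : Fin k) {a : ℝ} (h₁ : a ≤ 1) :
    Pi.single y₀ a ≤ detChannel f (f y₀) := fun y => by
  rcases eq_or_ne y y₀ with rfl | hy
  · simpa [detChannel] using h₁
  · simpa [hy] using (isChannel_detChannel f).1 (f y₀) y

lemma eq_of_lr_lt_lt_of_mem_extremePoints {p q : Fin k → ℝ} (hq : ∀ i, 0 ≤ q i)
    (hpq : ∀ i, 0 < p i + q i) {f : Fin k → Fin ℓ}
    (hext : ((detChannel f).mulVec p, (detChannel f).mulVec q) ∈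
      (channelRange p q).extremePoints ℝ)
    {u v w : Fin k} (huw : lr p q u < lr p q w) (hwv : lr p q w < lr p q v) (hfuv : f u = f v) :
    f w = f u := by
  by_contra hne
  obtain ⟨α, β, γ, hα, hα₁, hβ, hβ₁, hγ, hγ₁, hp_comb, hq_comb⟩ := exists_weights_of_lr_lt_lt hq hpq huw hwv
  have hu : Pi.single u α - Pi.single w β ≤ detChannel f (f u) :=
    (sub_le_self _ (Pi.single_nonneg.2 hβ.le)).trans (single_le_detChannel f u hα₁)
  have hw : Pi.single w β - Pi.single u α ≤ detChannel f (f w) :=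
    (sub_le_self _ (Pi.single_nonneg.2 hα.le)).trans (single_le_detChannel f w hβ₁)
  have hv : Pi.single v γ ≤ detChannel f (f v) := single_le_detChannel f v hγ₁
  rw [← hfuv] at hv
  have h₁ := isChannel_add_transfer (isChannel_detChannel f) (Ne.symm hne) hu (by rwa [neg_sub])
  have h₂ := isChannel_add_transfer (isChannel_detChannel f) (Ne.symm hne) hv
    ((neg_nonpos.2 (Pi.single_nonneg.2 hγ.le)).trans ((isChannel_detChannel f).1 (f w)))
  obtain ⟨hpuw, hquw⟩ := dotProduct_eq_zero_of_mem_extremePoints hext (Ne.symm hne) h₁ h₂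
    (by simp only [add_dotProduct, sub_dotProduct, single_dotProduct]; linarith)
    (by simp only [add_dotProduct, sub_dotProduct, single_dotProduct]; linarith)
  simp only [sub_dotProduct, single_dotProduct] at hpuw hquw
  have hzero : α * (p u * q w - p w * q u) = 0 := by linear_combination q w * hpuw - p w * hquw
  exact (mul_neg_of_pos_of_neg hα (sub_neg.2 (mul_lt_mul_of_lr_lt hq hpq huw))).ne hzero

end ChannelExtreme

open ChannelExtreme

theorem stmt8_general (k ℓ : ℕ) (p q : Fin k → ℝ)
    (hq : IsDist q) (hpq : ∀ i, 0 < p i + q i)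
    (A : Set ((Fin ℓ → ℝ) × (Fin ℓ → ℝ)))
    (hA : A = {z | ∃ T : Matrix (Fin ℓ) (Fin k) ℝ,
        IsChannel T ∧ z = (T.mulVec p, T.mulVec q)})
    (T : Matrix (Fin ℓ) (Fin k) ℝ) (hT : IsChannel T)
    (hext : (T.mulVec p, T.mulVec q) ∈ A.extremePoints ℝ) :
    IsThresholdChannel p q T := by
  subst hA
  obtain ⟨f, rfl⟩ := exists_eq_detChannel hT fun _ _ _ =>
    eq_of_pos_of_pos_of_mem_extremePoints hpq hT hext
  exact ⟨f, rfl, fun _ _ _ _ hfuv huw hwv =>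
    eq_of_lr_lt_lt_of_mem_extremePoints hq.1 hpq hext huw hwv hfuv⟩

/-- Extreme points of the joint range under communication constraints are obtained by
threshold channels (in particular, by deterministic channels). -/
theorem stmt8 (k ℓ : ℕ) (hℓ : 1 ≤ ℓ) (p q : Fin k → ℝ)
    (hp : IsDist p) (hq : IsDist q) (hpq : ∀ i, 0 < p i + q i)
    (A : Set ((Fin ℓ → ℝ) × (Fin ℓ → ℝ)))
    (hA : A = {z | ∃ T : Matrix (Fin ℓ) (Fin k) ℝ,
        IsChannel T ∧ z = (T.mulVec p, T.mulVec q)})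
    (T : Matrix (Fin ℓ) (Fin k) ℝ) (hT : IsChannel T)
    (hext : (T.mulVec p, T.mulVec q) ∈ A.extremePoints ℝ) :
    IsThresholdChannel p q T :=
  stmt8_general k ℓ p q hq hpq A hA T hT hext
end
end

section
/- Let p, q be distributions on [k] with p_i + q_i > 0 for all i, let ℓ ≥ 1, and let A := {(Tp, Tq) : T ∈ T_{ℓ,k}}. Let g : ℝ^ℓ × ℝ^ℓ → ℝ be quasiconvex on A, i.e., for every t ∈ ℝ the sublevel set {z ∈ A : g(z) ≤ t} is convex. Then sup over T ∈ T_{ℓ,k} of g(Tp, Tq) equals the maximum over threshold channels T ∈ T^thresh_{ℓ,k} of g(Tp, Tq); in particular the supremum is attained by a threshold channel. -/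
/-!
If a point `(Tp, Tq)` of the joint range lay outside the convex hull of the points of threshold
channels, a linear functional `φ` would separate it from that hull. But
`φ(Tp, Tq) = Σᵢ Σᵣ T r i · (aᵣ pᵢ + bᵣ qᵢ)` is maximised over channels by sending each input `i`
to the least maximiser of `r ↦ aᵣ pᵢ + bᵣ qᵢ`, and this map is a threshold map: an input whose
likelihood ratio lies between those of `u` and `v` has `(p w, q w)` in the open cone spanned by
`(p u, q u)` and `(p v, q v)`, so its score is a positive combination of theirs. Hence the joint
range lies in that convex hull, and the sublevel set of `g` at its largest value on threshold
channels, being convex, contains the whole range.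
-/

open scoped Classical ENNReal
open Finset

noncomputable section

open scoped Matrix

section LikelihoodRatio

variable {k : ℕ} {p q : Fin k → ℝ}

lemma lr_lt_lr_iff (hq : ∀ i, 0 ≤ q i) (hpq : ∀ i, 0 < p i + q i) (i j : Fin k) :
    lr p q i < lr p q j ↔ p i * q j < p j * q i := by
  have pos_of_zero : ∀ i, q i = 0 → 0 < p i := fun i h => by simpa [h] using hpq i
  unfold lr
  rcases eq_or_ne (q i) 0 with hi | hi <;> rcases eq_or_ne (q j) 0 with hj | hj
  · simp [hi, hj]
  · have : 0 < p i * q j := mul_pos (pos_of_zero i hi) ((hq j).lt_of_ne' hj)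
    simp only [hi, hj, if_true, if_false, mul_zero, not_top_lt, false_iff]
    linarith
  · have : 0 < p j * q i := mul_pos (pos_of_zero j hj) ((hq i).lt_of_ne' hi)
    simp only [hi, hj, if_true, if_false, mul_zero, EReal.coe_lt_top, true_iff]
    linarith
  · simp only [hi, hj, if_false, EReal.coe_lt_coe_iff]
    exact div_lt_div_iff₀ ((hq i).lt_of_ne' hi) ((hq j).lt_of_ne' hj)

lemma exists_pos_combination_of_lr_lt_lr (hq : ∀ i, 0 ≤ q i) (hpq : ∀ i, 0 < p i + q i)
    {u v w : Fin k} (huw : lr p q u < lr p q w) (hwv : lr p q w < lr p q v) :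
    ∃ α β : ℝ, 0 < α ∧ 0 < β ∧ p w = α * p u + β * p v ∧ q w = α * q u + β * q v := by
  have huv := huw.trans hwv
  rw [lr_lt_lr_iff hq hpq] at huw hwv huv
  have hD : p u * q v - p v * q u < 0 := by linarith
  -- Cramer's rule for the 2×2 system with columns `(p u, q u)` and `(p v, q v)`.
  refine ⟨(p w * q v - p v * q w) / (p u * q v - p v * q u),
    (p u * q w - p w * q u) / (p u * q v - p v * q u),
    div_pos_of_neg_of_neg (by linarith) hD, div_pos_of_neg_of_neg (by linarith) hD, ?_, ?_⟩ <;>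
  · rw [div_mul_eq_mul_div, div_mul_eq_mul_div, ← add_div, eq_div_iff hD.ne]
    ring

end LikelihoodRatio

section LeastArgmax

variable {ι : Type*} [Fintype ι] [Nonempty ι]

lemma filter_forall_le_nonempty (h : ι → ℝ) :
    (univ.filter fun r => ∀ r', h r' ≤ h r).Nonempty := by
  obtain ⟨r, -, hr⟩ := exists_max_image univ h univ_nonempty
  exact ⟨r, mem_filter.2 ⟨mem_univ r, fun r' => hr r' (mem_univ r')⟩⟩

variable [LinearOrder ι]

/-- Ties are broken towards the least index, consistently for all functions; this is what makes
`leastArgmax_eq_of_pos_combination` true. -/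
def leastArgmax (h : ι → ℝ) : ι :=
  (univ.filter fun r => ∀ r', h r' ≤ h r).min' (filter_forall_le_nonempty h)

lemma le_leastArgmax (h : ι → ℝ) (r : ι) : h r ≤ h (leastArgmax h) :=
  (mem_filter.1 (min'_mem _ (filter_forall_le_nonempty h))).2 r

lemma leastArgmax_le {h : ι → ℝ} {r : ι} (hr : ∀ r', h r' ≤ h r) : leastArgmax h ≤ r :=
  min'_le _ r (mem_filter.2 ⟨mem_univ r, hr⟩)

lemma leastArgmax_eq_of_pos_combination {h₁ h₂ h : ι → ℝ} {α β : ℝ} (hα : 0 < α) (hβ : 0 < β)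
    (hh : ∀ r, h r = α * h₁ r + β * h₂ r) (h₁₂ : leastArgmax h₁ = leastArgmax h₂) :
    leastArgmax h = leastArgmax h₁ := by
  set r := leastArgmax h₁
  have hr₁ := le_leastArgmax h₁
  have hr₂ : ∀ s, h₂ s ≤ h₂ r := fun s => h₁₂ ▸ le_leastArgmax h₂ s
  have hr : ∀ s, h s ≤ h r := fun s => by
    rw [hh, hh]
    nlinarith [hr₁ s, hr₂ s]
  set r' := leastArgmax h
  have hr' : h r' = h r := le_antisymm (hr r') (le_leastArgmax h r)
  have hr'₁ : h₁ r' = h₁ r := by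
    rw [hh, hh] at hr'
    nlinarith [hr₁ r', hr₂ r']
  exact le_antisymm (leastArgmax_le hr) (leastArgmax_le fun s => hr'₁ ▸ hr₁ s)

end LeastArgmax

def IsThresholdMap {k ℓ : ℕ} (p q : Fin k → ℝ) (f : Fin k → Fin ℓ) : Prop :=
  ∀ u v w : Fin k, lr p q u < lr p q v → f u = f v →
    lr p q u < lr p q w → lr p q w < lr p q v → f w = f u

lemma isThresholdMap_leastArgmax {k ℓ : ℕ} [NeZero ℓ] {p q : Fin k → ℝ} (hq : ∀ i, 0 ≤ q i)
    (hpq : ∀ i, 0 < p i + q i) (a b : Fin ℓ → ℝ) :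
    IsThresholdMap p q fun i => leastArgmax fun r => a r * p i + b r * q i := by
  intro u v w _ huv huw hwv
  obtain ⟨α, β, hα, hβ, hpw, hqw⟩ := exists_pos_combination_of_lr_lt_lr hq hpq huw hwv
  exact leastArgmax_eq_of_pos_combination hα hβ (fun r => by rw [hpw, hqw]; ring) huv

section Channels

variable {k ℓ : ℕ}

lemma isChannel_detChannel (f : Fin k → Fin ℓ) : IsChannel (detChannel f) := by
  refine ⟨fun r c => ?_, fun c => by simp [detChannel]⟩
  unfold detChannel
  split_ifs <;> norm_num

lemma apply_mulVec_eq_sum (φ : (Fin ℓ → ℝ) × (Fin ℓ → ℝ) →ₗ[ℝ] ℝ) (p q : Fin k → ℝ)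
    (T : Matrix (Fin ℓ) (Fin k) ℝ) :
    φ (T *ᵥ p, T *ᵥ q) = ∑ i, ∑ r, T r i *
      (φ (Pi.single r 1, 0) * p i + φ (0, Pi.single r 1) * q i) := by
  have hdecomp : (T *ᵥ p, T *ᵥ q) = ∑ i, ∑ r,
      ((T r i * p i) • ((Pi.single r 1, 0) : (Fin ℓ → ℝ) × (Fin ℓ → ℝ)) +
        (T r i * q i) • (0, Pi.single r 1)) := by
    ext s <;>
      simp [Matrix.mulVec, dotProduct, Prod.fst_sum, Prod.snd_sum, Finset.sum_apply, Pi.single_apply]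
  rw [hdecomp]
  simp only [map_sum, map_add, map_smul, smul_eq_mul]
  congr! 2 with i _ r _
  ring

lemma sum_mul_le_of_isChannel {T : Matrix (Fin ℓ) (Fin k) ℝ} (hT : IsChannel T) (i : Fin k)
    {c : Fin ℓ → ℝ} {r₀ : Fin ℓ} (hc : ∀ r, c r ≤ c r₀) : ∑ r, T r i * c r ≤ c r₀ :=
  calc ∑ r, T r i * c r ≤ ∑ r, T r i * c r₀ :=
        sum_le_sum fun r _ => mul_le_mul_of_nonneg_left (hc r) (hT.1 r i)
    _ = c r₀ := by rw [← sum_mul, hT.2 i, one_mul]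

lemma apply_mulVec_le_detChannel (φ : (Fin ℓ → ℝ) × (Fin ℓ → ℝ) →ₗ[ℝ] ℝ) (p q : Fin k → ℝ)
    {f : Fin k → Fin ℓ}
    (hf : ∀ i r, φ (Pi.single r 1, 0) * p i + φ (0, Pi.single r 1) * q i ≤
      φ (Pi.single (f i) 1, 0) * p i + φ (0, Pi.single (f i) 1) * q i)
    {T : Matrix (Fin ℓ) (Fin k) ℝ} (hT : IsChannel T) :
    φ (T *ᵥ p, T *ᵥ q) ≤ φ (detChannel f *ᵥ p, detChannel f *ᵥ q) := by
  rw [apply_mulVec_eq_sum, apply_mulVec_eq_sum]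
  refine sum_le_sum fun i _ => ?_
  simpa [detChannel, ite_mul] using sum_mul_le_of_isChannel hT i (hf i)

lemma mem_convexHull_threshold [NeZero ℓ] {p q : Fin k → ℝ} (hq : ∀ i, 0 ≤ q i)
    (hpq : ∀ i, 0 < p i + q i) {T : Matrix (Fin ℓ) (Fin k) ℝ} (hT : IsChannel T) :
    (T *ᵥ p, T *ᵥ q) ∈ convexHull ℝ
      ((fun f => (detChannel f *ᵥ p, detChannel f *ᵥ q)) '' {f | IsThresholdMap p q f}) := by
  by_contra hz
  obtain ⟨φ, u, hφK, hφz⟩ := geometric_hahn_banach_closed_point (convex_convexHull ℝ _)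
    ((Set.toFinite _).isCompact_convexHull ℝ).isClosed hz
  let score : Fin ℓ → Fin k → ℝ := fun r i =>
    φ (Pi.single r 1, 0) * p i + φ (0, Pi.single r 1) * q i
  let f : Fin k → Fin ℓ := fun i => leastArgmax (score · i)
  have hf : IsThresholdMap p q f := isThresholdMap_leastArgmax hq hpq _ _
  have hle := apply_mulVec_le_detChannel (φ : (Fin ℓ → ℝ) × (Fin ℓ → ℝ) →ₗ[ℝ] ℝ) p q
    (f := f) (fun i r => le_leastArgmax (score · i) r) hT
  have hlt := hφK _ (subset_convexHull ℝ _ ⟨f, hf, rfl⟩)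
  simp only [ContinuousLinearMap.coe_coe] at hle
  linarith

end Channels

lemma le_of_mem_convexHull {E : Type*} [AddCommGroup E] [Module ℝ E] {A S : Set E} {g : E → ℝ}
    (hg : ∀ t : ℝ, Convex ℝ {z | z ∈ A ∧ g z ≤ t}) (hSA : S ⊆ A) {t : ℝ}
    (hS : ∀ s ∈ S, g s ≤ t) {z : E} (hz : z ∈ convexHull ℝ S) : g z ≤ t :=
  (convexHull_min (t := {z | z ∈ A ∧ g z ≤ t}) (fun s hs => ⟨hSA hs, hS s hs⟩) (hg t) hz).2

theorem stmt9_general (k ℓ : ℕ) (hℓ : 1 ≤ ℓ) (p q : Fin k → ℝ)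
    (hq : IsDist q) (hpq : ∀ i, 0 < p i + q i)
    (A : Set ((Fin ℓ → ℝ) × (Fin ℓ → ℝ)))
    (hA : A = {z | ∃ T : Matrix (Fin ℓ) (Fin k) ℝ,
        IsChannel T ∧ z = (T.mulVec p, T.mulVec q)})
    (g : (Fin ℓ → ℝ) × (Fin ℓ → ℝ) → ℝ)
    (hg : ∀ t : ℝ, Convex ℝ {z | z ∈ A ∧ g z ≤ t}) :
    ∃ T₀ : Matrix (Fin ℓ) (Fin k) ℝ,
      IsThresholdChannel p q T₀ ∧ IsChannel T₀ ∧
      (∀ T : Matrix (Fin ℓ) (Fin k) ℝ, IsChannel T →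
        g (T.mulVec p, T.mulVec q) ≤ g (T₀.mulVec p, T₀.mulVec q)) ∧
      sSup {x : ℝ | ∃ T : Matrix (Fin ℓ) (Fin k) ℝ,
          IsChannel T ∧ x = g (T.mulVec p, T.mulVec q)} =
        g (T₀.mulVec p, T₀.mulVec q) := by
  have : NeZero ℓ := ⟨by omega⟩
  let pt : (Fin k → Fin ℓ) → (Fin ℓ → ℝ) × (Fin ℓ → ℝ) :=
    fun f => (detChannel f *ᵥ p, detChannel f *ᵥ q)
  obtain ⟨f₀, hf₀, hf₀max⟩ := Set.exists_max_image {f | IsThresholdMap p q f} (g ∘ pt)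
    (Set.toFinite _) ⟨fun _ => 0, fun _ _ _ _ _ _ _ => rfl⟩
  have hmax : ∀ T : Matrix (Fin ℓ) (Fin k) ℝ, IsChannel T →
      g (T *ᵥ p, T *ᵥ q) ≤ g (pt f₀) := fun T hT =>
    le_of_mem_convexHull hg (by rintro _ ⟨f, -, rfl⟩; exact hA ▸ ⟨_, isChannel_detChannel f, rfl⟩)
      (by rintro _ ⟨f, hf, rfl⟩; exact hf₀max f hf) (mem_convexHull_threshold hq.1 hpq hT)
  refine ⟨detChannel f₀, ⟨f₀, rfl, hf₀⟩, isChannel_detChannel f₀, hmax, ?_⟩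
  exact IsGreatest.csSup_eq
    ⟨⟨_, isChannel_detChannel f₀, rfl⟩, by rintro _ ⟨T, hT, rfl⟩; exact hmax T hT⟩

/-- Threshold channels maximize quasi-convex functions over the joint range of channels. -/
theorem stmt9 (k ℓ : ℕ) (hℓ : 1 ≤ ℓ) (p q : Fin k → ℝ)
    (hp : IsDist p) (hq : IsDist q) (hpq : ∀ i, 0 < p i + q i)
    (A : Set ((Fin ℓ → ℝ) × (Fin ℓ → ℝ)))
    (hA : A = {z | ∃ T : Matrix (Fin ℓ) (Fin k) ℝ,
        IsChannel T ∧ z = (T.mulVec p, T.mulVec q)})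
    (g : (Fin ℓ → ℝ) × (Fin ℓ → ℝ) → ℝ)
    (hg : ∀ t : ℝ, Convex ℝ {z | z ∈ A ∧ g z ≤ t}) :
    ∃ T₀ : Matrix (Fin ℓ) (Fin k) ℝ,
      IsThresholdChannel p q T₀ ∧ IsChannel T₀ ∧
      (∀ T : Matrix (Fin ℓ) (Fin k) ℝ, IsChannel T →
        g (T.mulVec p, T.mulVec q) ≤ g (T₀.mulVec p, T₀.mulVec q)) ∧
      sSup {x : ℝ | ∃ T : Matrix (Fin ℓ) (Fin k) ℝ,
          IsChannel T ∧ x = g (T.mulVec p, T.mulVec q)} =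
        g (T₀.mulVec p, T₀.mulVec q) :=
  stmt9_general k ℓ hℓ p q hq hpq A hA g hg
end
end

section
/- Let γ, ν ∈ ℝ^ℓ be nonnegative vectors. Let p, q be distributions on [k] such that p_i + q_i > 0 for all i and the likelihood ratios p_i/q_i (with value +∞ when q_i = 0) are pairwise distinct. Let A := {(Sp, Sq) : S ∈ J^{γ,ν}_{ℓ,k}}. If T ∈ J^{γ,ν}_{ℓ,k} has more than 2ℓ² pairwise distinct columns, then (Tp, Tq) is not an extreme point of A. -/
/-!
At an extreme point of the joint range, no direction that is feasible for the LP family at `T`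
can move `(Tp, Tq)` along a line in both senses. If two columns `i, j` of `T` differ then, both
summing to one, some row `r` has `T r i < T r j` and some row `r'` has `T r' j < T r' i`: mass
of column `i` can be moved from `r'` to `r`, and mass of column `j` from `r` to `r'`.
Sort the distinct columns by likelihood ratio and attach such a row pair to each consecutive
pair of them. If two consecutive pairs received the same row pair, then either a single column
could be perturbed both ways, or a column `c` could be perturbed against the columns `a, b`
surrounding it in likelihood ratio with cancelling effect on `(Tp, Tq)`. Both contradict
extremality, so there are at most `ℓ² + 1` distinct columns.
-/

open scoped Classical ENNReal
open Finset

noncomputable section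

/-- The LP family of channels `J^{γ,ν}_{ℓ,k}`:
channels `T` with `T(j,i) ≤ γ_j T(j,i') + ν_j` for all rows `j` and columns `i, i'`. -/
def IsLP {ℓ k : ℕ} (γ ν : Fin ℓ → ℝ) (T : Matrix (Fin ℓ) (Fin k) ℝ) : Prop :=
  IsChannel T ∧ ∀ (j : Fin ℓ) (i i' : Fin k), T j i ≤ γ j * T j i' + ν j

/-- Minimum entry of row `r` of `T`. -/
def rowMin {ℓ k : ℕ} (T : Matrix (Fin ℓ) (Fin k) ℝ) (r : Fin ℓ) : ℝ :=
  sInf (Set.range fun c => T r c)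

/-- Maximum entry of row `r` of `T`. -/
def rowMax {ℓ k : ℕ} (T : Matrix (Fin ℓ) (Fin k) ℝ) (r : Fin ℓ) : ℝ :=
  sSup (Set.range fun c => T r c)

/-- The entry `T(r,c)` is min-tight: `T(r,c) = m_r` and `M_r = γ_r m_r + ν_r`. -/
def MinTight {ℓ k : ℕ} (γ ν : Fin ℓ → ℝ) (T : Matrix (Fin ℓ) (Fin k) ℝ)
    (r : Fin ℓ) (c : Fin k) : Prop :=
  T r c = rowMin T r ∧ rowMax T r = γ r * rowMin T r + ν r

/-- The entry `T(r,c)` is max-tight: `T(r,c) = M_r` and `M_r = γ_r m_r + ν_r`. -/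
def MaxTight {ℓ k : ℕ} (γ ν : Fin ℓ → ℝ) (T : Matrix (Fin ℓ) (Fin k) ℝ)
    (r : Fin ℓ) (c : Fin k) : Prop :=
  T r c = rowMax T r ∧ rowMax T r = γ r * rowMin T r + ν r

open Filter Topology Function
open scoped Matrix

section Perturbation

variable {k ℓ : ℕ} {γ ν : Fin ℓ → ℝ} {T D D' : Matrix (Fin ℓ) (Fin k) ℝ} {r : Fin ℓ}

def CanIncrease (γ ν : Fin ℓ → ℝ) (T : Matrix (Fin ℓ) (Fin k) ℝ) (r : Fin ℓ) (c : Fin k) :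
    Prop :=
  ∀ c', T r c < γ r * T r c' + ν r

def CanDecrease (γ ν : Fin ℓ → ℝ) (T : Matrix (Fin ℓ) (Fin k) ℝ) (r : Fin ℓ) (c : Fin k) :
    Prop :=
  0 < T r c ∧ ∀ c', 0 < γ r → T r c' < γ r * T r c + ν r

structure IsFeasibleDir (γ ν : Fin ℓ → ℝ) (T D : Matrix (Fin ℓ) (Fin k) ℝ) : Prop where
  sum_col : ∀ c, ∑ r, D r c = 0
  canIncrease : ∀ r c, 0 < D r c → CanIncrease γ ν T r c
  canDecrease : ∀ r c, D r c < 0 → CanDecrease γ ν T r c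

lemma canIncrease_of_lt (hT : IsLP γ ν T) {i j : Fin k} (h : T r i < T r j) :
    CanIncrease γ ν T r i :=
  fun c' => h.trans_le (hT.2 r j c')

lemma canDecrease_of_lt (hT : IsLP γ ν T) {i j : Fin k} (h : T r i < T r j) :
    CanDecrease γ ν T r j :=
  ⟨(hT.1.1 r i).trans_lt h, fun c' hγ =>
    (hT.2 r c' i).trans_lt (add_lt_add_left (mul_lt_mul_of_pos_left h hγ) _)⟩

lemma eventually_nonneg_add_mul {a b : ℝ} (ha : 0 ≤ a) (hb : b < 0 → 0 < a) :
    ∀ᶠ ε in 𝓝[>] (0 : ℝ), 0 ≤ a + ε * b := by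
  rcases le_or_gt 0 b with hb₀ | hb₀
  · filter_upwards [self_mem_nhdsWithin] with ε hε
    exact add_nonneg ha (mul_nonneg (le_of_lt hε) hb₀)
  · have hlim : Tendsto (fun ε : ℝ => a + ε * b) (𝓝[>] 0) (𝓝 a) :=
      ((continuous_const.add (continuous_id.mul continuous_const)).tendsto' 0 a
        (by simp)).mono_left nhdsWithin_le_nhds
    exact (hlim.eventually (lt_mem_nhds (hb hb₀))).mono fun _ => le_of_lt

namespace IsFeasibleDir

lemma add (hD : IsFeasibleDir γ ν T D) (hD' : IsFeasibleDir γ ν T D') :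
    IsFeasibleDir γ ν T (D + D') where
  sum_col c := by simp [Finset.sum_add_distrib, hD.sum_col, hD'.sum_col]
  canIncrease r c h := by
    rcases lt_or_ge 0 (D r c) with h' | h'
    · exact hD.canIncrease r c h'
    · exact hD'.canIncrease r c (by rw [Matrix.add_apply] at h; linarith)
  canDecrease r c h := by
    rcases lt_or_ge (D r c) 0 with h' | h'
    · exact hD.canDecrease r c h'
    · exact hD'.canDecrease r c (by rw [Matrix.add_apply] at h; linarith)

lemma smul (hD : IsFeasibleDir γ ν T D) {t : ℝ} (ht : 0 < t) : IsFeasibleDir γ ν T (t • D) where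
  sum_col c := by simp [← Finset.mul_sum, hD.sum_col]
  canIncrease r c h := hD.canIncrease r c (pos_of_mul_pos_right h ht.le)
  canDecrease r c h := hD.canDecrease r c (neg_of_mul_neg_right h ht.le)

lemma eventually_isLP (hγ : ∀ j, 0 ≤ γ j) (hT : IsLP γ ν T) (hD : IsFeasibleDir γ ν T D) :
    ∀ᶠ ε in 𝓝[>] (0 : ℝ), IsLP γ ν (T + ε • D) := by
  have hnonneg (r c) : ∀ᶠ ε in 𝓝[>] (0 : ℝ), 0 ≤ T r c + ε * D r c :=
    eventually_nonneg_add_mul (hT.1.1 r c) fun h => (hD.canDecrease r c h).1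
  have hbound (r i i') : ∀ᶠ ε in 𝓝[>] (0 : ℝ),
      0 ≤ (γ r * T r i' + ν r - T r i) + ε * (γ r * D r i' - D r i) := by
    refine eventually_nonneg_add_mul (by linarith [hT.2 r i i']) fun hb => ?_
    rcases lt_or_ge 0 (D r i) with hi | hi
    · linarith [hD.canIncrease r i hi i']
    · have hneg : γ r * D r i' < 0 := by linarith
      have hγr : 0 < γ r := pos_of_mul_neg_left hneg (neg_of_mul_neg_right hneg (hγ r)).le
      linarith [(hD.canDecrease r i' (neg_of_mul_neg_right hneg (hγ r))).2 i hγr]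
  filter_upwards [eventually_all.2 fun r => eventually_all.2 (hnonneg r),
    eventually_all.2 fun r => eventually_all.2 fun i => eventually_all.2 (hbound r i)]
    with ε h₁ h₂
  refine ⟨⟨fun r c => by simpa using h₁ r c, fun c => ?_⟩, fun r i i' => ?_⟩
  · simp [Finset.sum_add_distrib, hT.1.2 c, ← Finset.mul_sum, hD.sum_col c]
  · simp only [Matrix.add_apply, Matrix.smul_apply, smul_eq_mul]
    linarith [h₂ r i i']

end IsFeasibleDir

end Perturbation

lemma eq_zero_of_add_smul_mem_of_sub_smul_mem {E : Type*} [AddCommGroup E] [Module ℝ E]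
    {A : Set E} {x u : E} (hx : x ∈ A.extremePoints ℝ) {s t : ℝ} (hs : 0 < s) (ht : 0 < t)
    (h₁ : x + s • u ∈ A) (h₂ : x - t • u ∈ A) : u = 0 := by
  have hseg : x ∈ openSegment ℝ (x + s • u) (x - t • u) := by
    refine ⟨t / (s + t), s / (s + t), by positivity, by positivity,
      by rw [← add_div, add_comm, div_self (add_pos hs ht).ne'], ?_⟩
    match_scalars <;> field_simp <;> ring
  have hsu : s • u = 0 := by simpa using hx.2 h₁ h₂ hseg
  exact (smul_eq_zero.1 hsu).resolve_left hs.ne'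

section Extreme

variable {k ℓ : ℕ} {γ ν : Fin ℓ → ℝ} {T D D' : Matrix (Fin ℓ) (Fin k) ℝ} {p q : Fin k → ℝ}
  {r r' : Fin ℓ} {a b c : Fin k}

def jointRange (γ ν : Fin ℓ → ℝ) (p q : Fin k → ℝ) : Set ((Fin ℓ → ℝ) × (Fin ℓ → ℝ)) :=
  {z | ∃ S : Matrix (Fin ℓ) (Fin k) ℝ, IsLP γ ν S ∧ z = (S.mulVec p, S.mulVec q)}

lemma IsFeasibleDir.mulVec_eq_zero (hγ : ∀ j, 0 ≤ γ j) (hT : IsLP γ ν T)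
    (hx : (T *ᵥ p, T *ᵥ q) ∈ (jointRange γ ν p q).extremePoints ℝ)
    (hD : IsFeasibleDir γ ν T D) (hD' : IsFeasibleDir γ ν T D')
    (hp : (D + D') *ᵥ p = 0) (hq : (D + D') *ᵥ q = 0) : D *ᵥ p = 0 ∧ D *ᵥ q = 0 := by
  obtain ⟨s, hTs, hs⟩ := ((hD.eventually_isLP hγ hT).and self_mem_nhdsWithin).exists
  obtain ⟨t, hTt, ht⟩ := ((hD'.eventually_isLP hγ hT).and self_mem_nhdsWithin).exists
  rw [Matrix.add_mulVec, add_eq_zero_iff_neg_eq] at hp hq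
  have hu := eq_zero_of_add_smul_mem_of_sub_smul_mem hx hs ht (u := (D *ᵥ p, D *ᵥ q))
    ⟨T + s • D, hTs, by simp [Matrix.add_mulVec, Matrix.smul_mulVec]⟩
    ⟨T + t • D', hTt, by simp [Matrix.add_mulVec, Matrix.smul_mulVec, ← hp, ← hq,
      sub_eq_add_neg]⟩
  simpa [Prod.ext_iff] using hu

def transfer (r r' : Fin ℓ) (c : Fin k) : Matrix (Fin ℓ) (Fin k) ℝ :=
  Matrix.single r c 1 - Matrix.single r' c 1

lemma transfer_swap (r r' : Fin ℓ) (c : Fin k) : transfer r' r c = -transfer r r' c :=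
  (neg_sub _ _).symm

lemma transfer_mulVec (w : Fin k → ℝ) :
    transfer r r' c *ᵥ w = w c • (Pi.single r 1 - Pi.single r' 1) := by
  ext x
  simp [transfer, Matrix.sub_mulVec, Matrix.single_mulVec, Pi.single_apply,
    Function.update_apply]
  split_ifs <;> ring

lemma transfer_mulVec_apply_left (h : r ≠ r') (w : Fin k → ℝ) :
    (transfer r r' c *ᵥ w) r = w c := by
  simp [transfer_mulVec, h]

lemma isFeasibleDir_transfer (hr : CanIncrease γ ν T r c) (hr' : CanDecrease γ ν T r' c) :
    IsFeasibleDir γ ν T (transfer r r' c) where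
  sum_col c' := by
    by_cases hc : c = c'
    · subst hc
      simp [transfer, Matrix.single_apply, Finset.sum_sub_distrib]
    · simp [transfer, hc]
  canIncrease x y h := by
    obtain ⟨rfl, rfl⟩ : x = r ∧ y = c := by
      by_contra hne
      simp only [transfer, Matrix.sub_apply, Matrix.single_apply] at h
      split_ifs at h <;> first | linarith | simp_all
    exact hr
  canDecrease x y h := by
    obtain ⟨rfl, rfl⟩ : x = r' ∧ y = c := by
      by_contra hne
      simp only [transfer, Matrix.sub_apply, Matrix.single_apply] at h
      split_ifs at h <;> first | linarith | simp_all
    exact hr'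

lemma false_of_two_sided_column (hγ : ∀ j, 0 ≤ γ j) (hT : IsLP γ ν T)
    (hx : (T *ᵥ p, T *ᵥ q) ∈ (jointRange γ ν p q).extremePoints ℝ) (hc : 0 < p c + q c)
    (hrr : r ≠ r') (hinc : CanIncrease γ ν T r c) (hdec' : CanDecrease γ ν T r' c)
    (hinc' : CanIncrease γ ν T r' c) (hdec : CanDecrease γ ν T r c) : False := by
  obtain ⟨hp, hq⟩ := (isFeasibleDir_transfer hinc hdec').mulVec_eq_zero hγ hT hx
    (isFeasibleDir_transfer hinc' hdec)
    (by rw [transfer_swap r r', add_neg_cancel, Matrix.zero_mulVec])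
    (by rw [transfer_swap r r', add_neg_cancel, Matrix.zero_mulVec])
  have hpc := congrFun hp r
  have hqc := congrFun hq r
  rw [transfer_mulVec_apply_left hrr] at hpc hqc
  simp only [Pi.zero_apply] at hpc hqc
  linarith

/-- The weights are the 2 × 2 minors of `(p, q)` on the columns `a, c, b`, so that moving mass
in column `c` one way and in columns `a, b` the other way leaves `(Tp, Tq)` unchanged. -/
lemma false_of_three_columns (hγ : ∀ j, 0 ≤ γ j) (hT : IsLP γ ν T)
    (hx : (T *ᵥ p, T *ᵥ q) ∈ (jointRange γ ν p q).extremePoints ℝ) (hc : 0 < p c + q c)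
    (hac : 0 < p a * q c - p c * q a) (hcb : 0 < p c * q b - p b * q c)
    (hab : 0 < p a * q b - p b * q a) (hrr : r ≠ r')
    (hincc : CanIncrease γ ν T r c) (hdecc : CanDecrease γ ν T r' c)
    (hinca : CanIncrease γ ν T r' a) (hdeca : CanDecrease γ ν T r a)
    (hincb : CanIncrease γ ν T r' b) (hdecb : CanDecrease γ ν T r b) : False := by
  have hcancel (w : Fin k → ℝ) (hw : w = p ∨ w = q) :
      ((p a * q b - p b * q a) • transfer r r' c + ((p c * q b - p b * q c) • transfer r' r a
        + (p a * q c - p c * q a) • transfer r' r b)) *ᵥ w = 0 := by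
    rw [transfer_swap r r' a, transfer_swap r r' b]
    ext x
    rcases hw with rfl | rfl <;>
    · simp only [Matrix.add_mulVec, Matrix.smul_mulVec, Matrix.neg_mulVec,
        transfer_mulVec, Pi.add_apply, Pi.smul_apply, Pi.neg_apply, Pi.zero_apply, smul_eq_mul]
      ring
  obtain ⟨hp, hq⟩ := ((isFeasibleDir_transfer hincc hdecc).smul hab).mulVec_eq_zero hγ hT hx
    (((isFeasibleDir_transfer hinca hdeca).smul hcb).add
      ((isFeasibleDir_transfer hincb hdecb).smul hac)) (hcancel p (.inl rfl))
    (hcancel q (.inr rfl))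
  have hpc := congrFun hp r
  have hqc := congrFun hq r
  simp only [Matrix.smul_mulVec, Pi.smul_apply, transfer_mulVec_apply_left hrr, smul_eq_mul,
    Pi.zero_apply, mul_eq_zero, hab.ne', false_or] at hpc hqc
  linarith

end Extreme

lemma exists_lt_of_ne_of_sum_eq {ι M : Type*} [Fintype ι] [AddCommMonoid M]
    [LinearOrder M] [IsOrderedCancelAddMonoid M] {f g : ι → M} (hne : f ≠ g)
    (hsum : ∑ i, f i = ∑ i, g i) : ∃ i, f i < g i := by
  by_contra! h
  exact hne (funext fun i =>
    ((Finset.sum_eq_sum_iff_of_le fun i _ => h i).1 hsum.symm i (Finset.mem_univ i)).symm)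

lemma exists_strictMono_injective_comp {α β δ : Type*} [Fintype α] [DecidableEq β]
    [LinearOrder δ] (f : α → β) {κ : α → δ} (hκ : Injective κ) {n : ℕ}
    (hn : (Finset.univ.image f).card = n) :
    ∃ σ : Fin n → α, StrictMono (κ ∘ σ) ∧ Injective (f ∘ σ) := by
  obtain ⟨u, -, hfu, hu⟩ := Finset.exists_subset_injOn_image_eq_of_surjOn
    (Set.univ : Set α) (Finset.univ.image f) (by intro y hy; simpa using hy)
  have hcard : (u.image κ).card = n := by
    rw [Finset.card_image_of_injective _ hκ, ← hn, ← hu, Finset.card_image_of_injOn hfu]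
  have hmem (m : Fin n) : ∃ a ∈ u, κ a = (u.image κ).orderEmbOfFin hcard m :=
    Finset.mem_image.1 (Finset.orderEmbOfFin_mem _ hcard m)
  choose σ hσu hσ using hmem
  have hmono : StrictMono (κ ∘ σ) := by
    simpa only [comp_def, hσ] using ((u.image κ).orderEmbOfFin hcard).strictMono
  exact ⟨σ, hmono, fun m m' h => hmono.injective (congrArg κ (hfu (hσu m) (hσu m') h))⟩

section Chain

variable {k ℓ : ℕ} {γ ν : Fin ℓ → ℝ} {T : Matrix (Fin ℓ) (Fin k) ℝ} {p q : Fin k → ℝ}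

lemma chain_length_le_sq (hγ : ∀ j, 0 ≤ γ j) (hT : IsLP γ ν T) (hpq : ∀ i, 0 < p i + q i)
    (hx : (T *ᵥ p, T *ᵥ q) ∈ (jointRange γ ν p q).extremePoints ℝ) {n : ℕ}
    (σ : Fin (n + 1) → Fin k)
    (hσ : ∀ m m', m < m' → 0 < p (σ m) * q (σ m') - p (σ m') * q (σ m))
    (hcol : ∀ m : Fin n, Tᵀ (σ m.castSucc) ≠ Tᵀ (σ m.succ)) : n ≤ ℓ ^ 2 := by
  have hrows (m : Fin n) : ∃ rr : Fin ℓ × Fin ℓ,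
      T rr.1 (σ m.castSucc) < T rr.1 (σ m.succ) ∧ T rr.2 (σ m.succ) < T rr.2 (σ m.castSucc) := by
    obtain ⟨r, hr⟩ := exists_lt_of_ne_of_sum_eq (hcol m)
      (by simp only [Matrix.transpose_apply, hT.1.2])
    obtain ⟨r', hr'⟩ := exists_lt_of_ne_of_sum_eq (hcol m).symm
      (by simp only [Matrix.transpose_apply, hT.1.2])
    exact ⟨(r, r'), hr, hr'⟩
  choose ρ hρ using hrows
  have hρ_inj : Injective ρ := by
    refine Injective.of_lt_imp_ne fun m₁ m₂ hlt heq => ?_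
    obtain ⟨h₁, h₁'⟩ := hρ m₁
    obtain ⟨h₂, h₂'⟩ := hρ m₂
    rw [heq] at h₁ h₁'
    have hrr : (ρ m₂).1 ≠ (ρ m₂).2 := fun h => by rw [h] at h₂; exact h₂.not_gt h₂'
    rcases (Fin.succ_le_castSucc_iff.2 hlt).eq_or_lt with hadj | hgap
    · rw [hadj] at h₁ h₁'
      exact false_of_two_sided_column hγ hT hx (hpq _) hrr (canIncrease_of_lt hT h₂)
        (canDecrease_of_lt hT h₂') (canIncrease_of_lt hT h₁') (canDecrease_of_lt hT h₁)
    · have hstep : m₂.castSucc < m₂.succ := Fin.castSucc_lt_succ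
      exact false_of_three_columns hγ hT hx (hpq _) (hσ _ _ hgap) (hσ _ _ hstep)
        (hσ _ _ (hgap.trans hstep)) hrr
        (canIncrease_of_lt hT h₂) (canDecrease_of_lt hT h₂') (canIncrease_of_lt hT h₁')
        (canDecrease_of_lt hT h₁) (canIncrease_of_lt hT h₂') (canDecrease_of_lt hT h₂)
  simpa [sq] using Fintype.card_le_of_injective ρ hρ_inj

end Chain

lemma injective_div_add_of_likelihoodRatio_injective {k : ℕ} {p q : Fin k → ℝ}
    (hpq : ∀ i, 0 < p i + q i)
    (hlr : Injective fun i => if q i = 0 then (⊤ : EReal) else ((p i / q i : ℝ) : EReal)) :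
    Injective fun i => q i / (p i + q i) := by
  intro i j hij
  have hcross : q i * p j = q j * p i := by
    rw [div_eq_div_iff (hpq i).ne' (hpq j).ne'] at hij
    linarith
  apply hlr
  by_cases hqi : q i = 0 <;> by_cases hqj : q j = 0
  · simp [hqi, hqj]
  · have : p i = 0 := by simpa [hqi, hqj] using hcross
    linarith [hpq i]
  · have : p j = 0 := by simpa [hqi, hqj] using hcross
    linarith [hpq j]
  · simp only [hqi, hqj, if_false, EReal.coe_eq_coe_iff]
    rw [div_eq_div_iff hqi hqj]
    linarith

lemma cross_pos_of_div_add_lt {p₁ q₁ p₂ q₂ : ℝ} (h₁ : 0 < p₁ + q₁) (h₂ : 0 < p₂ + q₂)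
    (h : q₁ / (p₁ + q₁) < q₂ / (p₂ + q₂)) : 0 < p₁ * q₂ - p₂ * q₁ := by
  rw [div_lt_div_iff₀ h₁ h₂] at h
  linarith

theorem stmt11_general (k ℓ : ℕ) (γ ν : Fin ℓ → ℝ) (hγ : ∀ j, 0 ≤ γ j)
    (p q : Fin k → ℝ) (hpq : ∀ i, 0 < p i + q i)
    (hlr : Function.Injective
      (fun i => if q i = 0 then (⊤ : EReal) else ((p i / q i : ℝ) : EReal)))
    (A : Set ((Fin ℓ → ℝ) × (Fin ℓ → ℝ)))
    (hA : A = {z | ∃ S : Matrix (Fin ℓ) (Fin k) ℝ,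
        IsLP γ ν S ∧ z = (S.mulVec p, S.mulVec q)})
    (T : Matrix (Fin ℓ) (Fin k) ℝ) (hT : IsLP γ ν T)
    (hcols : 2 * ℓ ^ 2 < (Finset.univ.image (fun c => fun r => T r c)).card) :
    (T.mulVec p, T.mulVec q) ∉ A.extremePoints ℝ := by
  subst hA
  intro hx
  obtain ⟨n, hn⟩ : ∃ n, (Finset.univ.image fun c => fun r => T r c).card = n + 1 :=
    Nat.exists_eq_add_one.2 (by omega)
  obtain ⟨σ, hσ, hσ_inj⟩ := exists_strictMono_injective_comp _
    (injective_div_add_of_likelihoodRatio_injective hpq hlr) hn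
  have hn_le : n ≤ ℓ ^ 2 := chain_length_le_sq hγ hT hpq hx σ
    (fun _ _ h => cross_pos_of_div_add_lt (hpq _) (hpq _) (hσ h))
    (fun _ => hσ_inj.ne Fin.castSucc_lt_succ.ne)
  obtain rfl : ℓ = 0 := by simpa using (by omega : ℓ ^ 2 < 1)
  simpa using hT.1.2 (σ 0)

/-- A channel in the LP family with more than `2ℓ²` distinct columns does not produce an
extreme point of the joint range. -/
theorem stmt11 (k ℓ : ℕ) (γ ν : Fin ℓ → ℝ) (hγ : ∀ j, 0 ≤ γ j) (hν : ∀ j, 0 ≤ ν j)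
    (p q : Fin k → ℝ) (hp : IsDist p) (hq : IsDist q) (hpq : ∀ i, 0 < p i + q i)
    (hlr : Function.Injective
      (fun i => if q i = 0 then (⊤ : EReal) else ((p i / q i : ℝ) : EReal)))
    (A : Set ((Fin ℓ → ℝ) × (Fin ℓ → ℝ)))
    (hA : A = {z | ∃ S : Matrix (Fin ℓ) (Fin k) ℝ,
        IsLP γ ν S ∧ z = (S.mulVec p, S.mulVec q)})
    (T : Matrix (Fin ℓ) (Fin k) ℝ) (hT : IsLP γ ν T)
    (hcols : 2 * ℓ ^ 2 < (Finset.univ.image (fun c => fun r => T r c)).card) :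
    (T.mulVec p, T.mulVec q) ∉ A.extremePoints ℝ :=
  stmt11_general k ℓ γ ν hγ p q hpq hlr A hA T hT hcols
end
end
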